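/- arXiv:2511.06034 — 5 statements merged into one kernel-verified Lean document; each statement's English description precedes it below -/
import Mathlib

section
/- Let t and n be integers with t ≥ 1 and n ≥ 2t + 4. Then AR(n, P₄ ∪ tP₂) = AR(n, (t + 2)P₂). -/
/-- The disjoint union of `k` copies of a graph `G`, on vertex set `Fin k × V`. -/
def SimpleGraph.multiCopy (k : ℕ) {V : Type*} (G : SimpleGraph V) :
    SimpleGraph (Fin k × V) where
  Adj a b := a.1 = b.1 ∧ G.Adj a.2 b.2
  symm := by
    constructor
    intro a b h
    exact ⟨h.1.symm, h.2.symm⟩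
  loopless := by
    constructor
    intro a h
    exact G.irrefl h.2

/-- The disjoint union of two graphs `G` and `H`, on vertex set `V ⊕ W`. -/
def SimpleGraph.disjUnion {V W : Type*} (G : SimpleGraph V) (H : SimpleGraph W) :
    SimpleGraph (V ⊕ W) where
  Adj a b :=
    match a, b with
    | Sum.inl a, Sum.inl b => G.Adj a b
    | Sum.inr a, Sum.inr b => H.Adj a b
    | _, _ => False
  symm := by
    constructor
    rintro (a | a) (b | b) h <;> simp only at h ⊢
    · exact h.symm
    · exact h.symm
  loopless := by
    constructor
    rintro (a | a) h <;> simp only at h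
    · exact G.irrefl h
    · exact H.irrefl h

/-- The linear forest `k P₄ ∪ t P₂`. -/
def kP4tP2 (k t : ℕ) : SimpleGraph ((Fin k × Fin 4) ⊕ (Fin t × Fin 2)) :=
  (SimpleGraph.multiCopy k (SimpleGraph.pathGraph 4)).disjUnion
    (SimpleGraph.multiCopy t (SimpleGraph.pathGraph 2))

/-- The edge-coloring `c` of `K_n` admits a rainbow copy of `H`: there is an injection
of the vertices of `H` into `Fin n` such that distinct edges of `H` get distinct colors. -/
def HasRainbowCopy {V : Type*} (n : ℕ) (c : Sym2 (Fin n) → ℕ) (H : SimpleGraph V) : Prop :=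
  ∃ f : V ↪ Fin n, Set.InjOn (fun e => c (Sym2.map (⇑f) e)) H.edgeSet

/-- The number of colors used by an edge-coloring `c` on the edges of `K_n`. -/
noncomputable def colorCount (n : ℕ) (c : Sym2 (Fin n) → ℕ) : ℕ :=
  (c '' (⊤ : SimpleGraph (Fin n)).edgeSet).ncard

/-- The anti-Ramsey number `AR(n, H)`: the maximum number of colors in an edge-coloring
of `K_n` containing no rainbow copy of `H`. -/
noncomputable def AR {V : Type*} (n : ℕ) (H : SimpleGraph V) : ℕ :=
  sSup {m : ℕ | ∃ c : Sym2 (Fin n) → ℕ, colorCount n c = m ∧ ¬ HasRainbowCopy n c H}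

/-- The set of edges of `G` with both endpoints in `A` (the edges of `G[A]`). -/
def edgesInside {α : Type*} (G : SimpleGraph α) (A : Set α) : Set (Sym2 α) :=
  {e ∈ G.edgeSet | ∀ v ∈ e, v ∈ A}

/-- The set of edges of `G` with one endpoint in `A` and the other in `B`,
i.e. `[A, B]_G`. -/
def edgesBetween {α : Type*} (G : SimpleGraph α) (A B : Set α) : Set (Sym2 α) :=
  {e ∈ G.edgeSet | ∃ u v, e = s(u, v) ∧ u ∈ A ∧ v ∈ B}

/-!
`P₄ ∪ tP₂` contains `(t + 2)P₂`, so every colouring with a rainbow `P₄ ∪ tP₂` has a rainbow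
`(t + 2)P₂`, and `AR(n, (t + 2)P₂) ≤ AR(n, P₄ ∪ tP₂)`.

Conversely, let `c` have no rainbow `P₄ ∪ tP₂`. If `c` has no rainbow `(t + 2)P₂` either, it counts
for `AR(n, (t + 2)P₂)`. Otherwise fix a rainbow matching `M` of `t + 2` edges and call the colours
not on `M` fresh. A rainbow path `P₄` that meets at most two edges of `M` and avoids the colours of
the other `t` edges completes to a rainbow `P₄ ∪ tP₂`. Excluding such paths shows that every fresh
colour appears at a vertex outside `M`, that a vertex outside `M` sees at most two fresh colours,
and that if one vertex sees two, there are no other fresh colours. So `c` has at most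
`(t + 2) + max 2 (n - 2t - 4) ≤ n` colours. Finally, the star colouring (distinct colours on the
edges at one vertex, one further colour on all other edges) has `n` colours and no rainbow `3P₂`,
so `n ≤ AR(n, (t + 2)P₂)`.
-/

open SimpleGraph Function

theorem edgeSet_multiCopy_pathGraph_two (k : ℕ) :
    (multiCopy k (pathGraph 2)).edgeSet = Set.range fun i : Fin k => s((i, 0), (i, 1)) := by
  ext e
  induction e using Sym2.ind with
  | h a b =>
    obtain ⟨i, x⟩ := a
    obtain ⟨j, y⟩ := b
    simp only [mem_edgeSet, multiCopy, pathGraph_adj, Set.mem_range, Sym2.eq_iff, Prod.ext_iff]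
    fin_cases x <;> fin_cases y <;> simp [eq_comm]

theorem edgeSet_multiCopy_one_pathGraph_four :
    (multiCopy 1 (pathGraph 4)).edgeSet =
      {s((0, 0), (0, 1)), s((0, 1), (0, 2)), s((0, 2), (0, 3))} := by
  ext e
  induction e using Sym2.ind with
  | h a b =>
    obtain ⟨i, x⟩ := a
    obtain ⟨j, y⟩ := b
    obtain rfl := Subsingleton.elim i 0
    obtain rfl := Subsingleton.elim j 0
    simp only [mem_edgeSet, multiCopy, pathGraph_adj]
    fin_cases x <;> fin_cases y <;> simp

theorem edgeSet_kP4tP2_one (t : ℕ) :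
    (kP4tP2 1 t).edgeSet =
      {s(.inl (0, 0), .inl (0, 1)), s(.inl (0, 1), .inl (0, 2)), s(.inl (0, 2), .inl (0, 3))} ∪
        Set.range fun q : Fin t => s(.inr (q, 0), .inr (q, 1)) := by
  ext e
  induction e using Sym2.ind with
  | h a b =>
    rcases a with a | a <;> rcases b with b | b
    · change s(a, b) ∈ (multiCopy 1 (pathGraph 4)).edgeSet ↔ _
      rw [edgeSet_multiCopy_one_pathGraph_four]
      simp
    · simp [kP4tP2, disjUnion]
    · simp [kP4tP2, disjUnion]
    · change s(a, b) ∈ (multiCopy t (pathGraph 2)).edgeSet ↔ _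
      rw [edgeSet_multiCopy_pathGraph_two]
      simp

def matchColor {n k : ℕ} (c : Sym2 (Fin n) → ℕ) (v : Fin k × Fin 2 → Fin n) (i : Fin k) : ℕ :=
  c s(v (i, 0), v (i, 1))

theorem matchColor_eq_of_ne {n k : ℕ} (c : Sym2 (Fin n) → ℕ) (v : Fin k × Fin 2 → Fin n)
    (i : Fin k) {a b : Fin 2} (hab : a ≠ b) : c s(v (i, a), v (i, b)) = matchColor c v i := by
  fin_cases a <;> fin_cases b <;> first | exact absurd rfl hab | rfl | exact congrArg c Sym2.eq_swap

theorem two_mul_le_of_embedding {n k : ℕ} (v : Fin k × Fin 2 ↪ Fin n) : 2 * k ≤ n := by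
  simpa [mul_comm] using Fintype.card_le_of_embedding v

theorem HasRainbowCopy.of_copy {n : ℕ} {c : Sym2 (Fin n) → ℕ} {V W : Type*}
    {H' : SimpleGraph V} {H : SimpleGraph W} (f : Copy H' H) (h : HasRainbowCopy n c H) :
    HasRainbowCopy n c H' := by
  obtain ⟨g, hg⟩ := h
  refine ⟨f.toEmbedding.trans g, fun e he e' he' hee' => ?_⟩
  have key : ∀ e, Sym2.map (f.toEmbedding.trans g) e = Sym2.map g (Sym2.map f.toHom e) :=
    fun e => by rw [Sym2.map_map]; rfl
  simp only [key] at hee'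
  exact Sym2.map.injective f.injective
    (hg (f.toHom.map_mem_edgeSet he) (f.toHom.map_mem_edgeSet he') hee')

theorem hasRainbowCopy_multiCopy_pathGraph_two_iff {n k : ℕ} {c : Sym2 (Fin n) → ℕ} :
    HasRainbowCopy n c (multiCopy k (pathGraph 2)) ↔
      ∃ f : Fin k × Fin 2 ↪ Fin n, Injective (matchColor c f) := by
  simp only [HasRainbowCopy, edgeSet_multiCopy_pathGraph_two, Set.InjOn, Set.forall_mem_range,
    Sym2.map_mk]
  refine exists_congr fun f => ⟨fun h i j hij => ?_, fun h i j hij => by rw [h hij]⟩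
  simpa using congrArg (Sym2.map Prod.fst) (h i j hij)

theorem exists_embedding_avoiding {t : ℕ} {i j : Fin (t + 2)} (hij : i ≠ j) :
    ∃ g : Fin t ↪ Fin (t + 2), ∀ q, g q ≠ i ∧ g q ≠ j := by
  obtain ⟨j', rfl⟩ := Fin.exists_succAbove_eq hij.symm
  exact ⟨⟨fun q => i.succAbove (j'.succAbove q),
    Fin.succAbove_right_injective.comp Fin.succAbove_right_injective⟩,
    fun q => ⟨Fin.succAbove_ne _ _,
      fun h => Fin.succAbove_ne _ q (Fin.succAbove_right_injective h)⟩⟩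

theorem hasRainbowCopy_kP4tP2_one {n t : ℕ} {c : Sym2 (Fin n) → ℕ} {p₀ p₁ p₂ p₃ : Fin n}
    {e : Fin t × Fin 2 ↪ Fin n} (hp : [p₀, p₁, p₂, p₃].Nodup) (hpe : ∀ q, e q ∉ [p₀, p₁, p₂, p₃])
    (hc : [c s(p₀, p₁), c s(p₁, p₂), c s(p₂, p₃)].Nodup) (he : Injective (matchColor c e))
    (hce : ∀ i, matchColor c e i ∉ [c s(p₀, p₁), c s(p₁, p₂), c s(p₂, p₃)]) :
    HasRainbowCopy n c (kP4tP2 1 t) := by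
  set F : (Fin 1 × Fin 4) ⊕ (Fin t × Fin 2) → Fin n := Sum.elim (fun q => ![p₀, p₁, p₂, p₃] q.2) e
  have hF : Injective F := by
    have hpath : ∀ a, ![p₀, p₁, p₂, p₃] a ∈ [p₀, p₁, p₂, p₃] := by intro a; fin_cases a <;> simp
    rintro (⟨i, a⟩ | q) (⟨j, b⟩ | r) h <;> simp only [F, Sum.elim_inl, Sum.elim_inr] at h
    · obtain rfl := Subsingleton.elim i j
      simp only [List.nodup_cons, List.mem_cons, List.not_mem_nil, List.nodup_nil] at hp
      fin_cases a <;> fin_cases b <;> simp_all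
    · exact (hpe r (h ▸ hpath a)).elim
    · exact (hpe q (h ▸ hpath b)).elim
    · rw [e.injective h]
  refine ⟨⟨F, hF⟩, ?_⟩
  rw [edgeSet_kP4tP2_one]
  simp only [List.nodup_cons, List.mem_cons, List.not_mem_nil, List.nodup_nil, or_false, and_true,
    not_or, matchColor] at hc hce
  rintro _ ((rfl | rfl | rfl) | ⟨i, rfl⟩) _ ((rfl | rfl | rfl) | ⟨j, rfl⟩) h <;>
    simp only [Embedding.coeFn_mk, Sym2.map_mk, Sum.elim_inl, Sum.elim_inr,
      Matrix.cons_val_zero, Matrix.cons_val_one, Matrix.cons_val, F] at h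
  all_goals first | rfl | rw [he h] | grind

-- Matching edges `0` and `1` go to the edges `01` and `23` of `P₄`, the others to `tP₂`.
def matchingToP4tP2 (t : ℕ) (q : Fin (t + 2) × Fin 2) : (Fin 1 × Fin 4) ⊕ (Fin t × Fin 2) :=
  if h : (q.1 : ℕ) < 2 then .inl (0, ⟨2 * q.1 + q.2, by omega⟩)
  else .inr (⟨q.1 - 2, by omega⟩, q.2)

def copyMatchingP4tP2 (t : ℕ) : Copy (multiCopy (t + 2) (pathGraph 2)) (kP4tP2 1 t) := by
  refine ⟨⟨matchingToP4tP2 t, ?_⟩, ?_⟩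
  · rintro ⟨i, a⟩ ⟨j, b⟩ ⟨rfl, hab⟩
    simp only [pathGraph_adj] at hab
    simp only [matchingToP4tP2]
    split_ifs <;> simp [kP4tP2, disjUnion, multiCopy, pathGraph_adj] <;> omega
  · rintro ⟨i, a⟩ ⟨j, b⟩ h
    change matchingToP4tP2 t (i, a) = matchingToP4tP2 t (j, b) at h
    simp only [matchingToP4tP2] at h
    split_ifs at h <;> simp [Fin.ext_iff] at h <;> ext <;> simp <;> omega

section AntiRamseyNumber

variable {n : ℕ} {V : Type*} {H : SimpleGraph V}

theorem colorCount_le_AR {c : Sym2 (Fin n) → ℕ} (h : ¬HasRainbowCopy n c H) :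
    colorCount n c ≤ AR n H :=
  le_csSup ⟨_, by rintro _ ⟨c, rfl, -⟩; exact Set.ncard_image_le (Set.toFinite _)⟩ ⟨c, rfl, h⟩

theorem AR_le {m : ℕ} (h : ∀ c, ¬HasRainbowCopy n c H → colorCount n c ≤ m) : AR n H ≤ m :=
  csSup_le' <| by rintro _ ⟨c, rfl, hc⟩; exact h c hc

theorem AR_mono {W : Type*} {H' : SimpleGraph W} (f : Copy H' H) : AR n H' ≤ AR n H :=
  AR_le fun _ hc => colorCount_le_AR fun h => hc (h.of_copy f)

end AntiRamseyNumber

def starColoring (n : ℕ) : Sym2 (Fin n) → ℕ :=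
  Sym2.lift ⟨fun a b => if (a : ℕ) = 0 ∨ (b : ℕ) = 0 then a + b else 0,
    fun a b => by simp only [or_comm, add_comm]⟩

theorem colorCount_starColoring {n : ℕ} (hn : 3 ≤ n) : colorCount n (starColoring n) = n := by
  suffices starColoring n '' (⊤ : SimpleGraph (Fin n)).edgeSet = Set.range Fin.val by
    rw [colorCount, this, Set.ncard_range_of_injective Fin.val_injective, Nat.card_eq_fintype_card,
      Fintype.card_fin]
  ext m
  constructor
  · rintro ⟨e, -, rfl⟩
    induction e using Sym2.ind with
    | h a b =>
      by_cases h : (a : ℕ) = 0 ∨ (b : ℕ) = 0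
      · rcases h with h | h
        · exact ⟨b, by simp [starColoring, h]⟩
        · exact ⟨a, by simp [starColoring, h]⟩
      · exact ⟨⟨0, by omega⟩, by simp [starColoring, h]⟩
  · rintro ⟨a, rfl⟩
    by_cases ha : (a : ℕ) = 0
    · refine ⟨s(⟨1, by omega⟩, ⟨2, by omega⟩), by simp [Fin.ext_iff], ?_⟩
      simp [starColoring, ha]
    · refine ⟨s(⟨0, by omega⟩, a), by simp [Fin.ext_iff]; omega, ?_⟩
      simp [starColoring]

theorem starColoring_not_hasRainbowCopy {n k : ℕ} (hk : 3 ≤ k) :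
    ¬HasRainbowCopy n (starColoring n) (multiCopy k (pathGraph 2)) := by
  rw [hasRainbowCopy_multiCopy_pathGraph_two_iff]
  rintro ⟨f, hf⟩
  -- only the one edge through vertex `0` can get a nonzero colour
  obtain ⟨m, hm⟩ : ∃ m : Fin k, ∀ i, i ≠ m → starColoring n s(f (i, 0), f (i, 1)) = 0 := by
    by_cases h0 : ∃ q, (f q : ℕ) = 0
    · obtain ⟨q, hq⟩ := h0
      refine ⟨q.1, fun i hi => ?_⟩
      have hne : ∀ a, (f (i, a) : ℕ) ≠ 0 := fun a ha =>
        hi (congrArg Prod.fst (f.injective (Fin.ext (ha.trans hq.symm))))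
      simp [starColoring, hne]
    · simp only [not_exists] at h0
      exact ⟨⟨0, by omega⟩, fun i _ => by simp [starColoring, h0]⟩
  have hcard : 1 < (Finset.univ.erase m).card := by
    rw [Finset.card_erase_of_mem (Finset.mem_univ _), Finset.card_univ, Fintype.card_fin]
    omega
  obtain ⟨i, hi, j, hj, hij⟩ := Finset.one_lt_card.1 hcard
  exact hij (hf ((hm i (Finset.ne_of_mem_erase hi)).trans (hm j (Finset.ne_of_mem_erase hj)).symm))

def IsFreshAt {n k : ℕ} (c : Sym2 (Fin n) → ℕ) (v : Fin k × Fin 2 → Fin n) (x : Fin n)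
    (φ : ℕ) : Prop :=
  φ ∉ Set.range (matchColor c v) ∧ ∃ w, w ≠ x ∧ c s(x, w) = φ

namespace RainbowMatching

variable {n t : ℕ} {c : Sym2 (Fin n) → ℕ} {v : Fin (t + 2) × Fin 2 ↪ Fin n}
  (hv : Injective (matchColor c v)) (hfree : ¬HasRainbowCopy n c (kP4tP2 1 t))
include hv hfree

-- The `t` matching edges other than `i` and `j` complete the path to a rainbow `P₄ ∪ tP₂`.
theorem false_of_path {i j : Fin (t + 2)} (hij : i ≠ j) {p₀ p₁ p₂ p₃ : Fin n}
    (hp : [p₀, p₁, p₂, p₃].Nodup) (hpv : ∀ q, v q ∈ [p₀, p₁, p₂, p₃] → q.1 = i ∨ q.1 = j)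
    (hc : [c s(p₀, p₁), c s(p₁, p₂), c s(p₂, p₃)].Nodup)
    (hcv : ∀ m, matchColor c v m ∈ [c s(p₀, p₁), c s(p₁, p₂), c s(p₂, p₃)] → m = i ∨ m = j) :
    False := by
  obtain ⟨g, hg⟩ := exists_embedding_avoiding hij
  refine hfree (hasRainbowCopy_kP4tP2_one (e := (g.prodMap (.refl _)).trans v) hp
    (fun q hq => ?_) hc (hv.comp g.injective) fun m hm => ?_)
  · rcases hpv _ hq with h | h
    exacts [(hg q.1).1 h, (hg q.1).2 h]
  · rcases hcv _ hm with h | h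
    exacts [(hg m).1 h, (hg m).2 h]

-- The second matching edge is one coloured `γ`, if there is one.
theorem false_of_path_one_edge {i : Fin (t + 2)} (γ : ℕ) {p₀ p₁ p₂ p₃ : Fin n}
    (hp : [p₀, p₁, p₂, p₃].Nodup) (hpv : ∀ q, v q ∈ [p₀, p₁, p₂, p₃] → q.1 = i)
    (hc : [c s(p₀, p₁), c s(p₁, p₂), c s(p₂, p₃)].Nodup)
    (hcv : ∀ m, matchColor c v m ∈ [c s(p₀, p₁), c s(p₁, p₂), c s(p₂, p₃)] →
      m = i ∨ matchColor c v m = γ) :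
    False := by
  obtain ⟨j, hji, hj⟩ : ∃ j, j ≠ i ∧ ∀ m, matchColor c v m = γ → m = i ∨ m = j := by
    by_cases h : ∃ j, j ≠ i ∧ matchColor c v j = γ
    · obtain ⟨j, hji, hj⟩ := h
      exact ⟨j, hji, fun m hm => Or.inr (hv (hm.trans hj.symm))⟩
    · obtain ⟨j, hj⟩ := exists_ne i
      exact ⟨j, hj, fun m hm => Or.inl (by_contra fun hmi => h ⟨m, hmi, hm⟩)⟩
  exact false_of_path hv hfree hji.symm hp (fun q hq => Or.inl (hpv q hq)) hc
    fun m hm => (hcv m hm).elim Or.inl (hj m)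

theorem color_cross_mem {k l : Fin (t + 2)} (hkl : k ≠ l) (a b : Fin 2) :
    c s(v (k, a), v (l, b)) ∈ Set.range (matchColor c v) := by
  by_contra hφ
  obtain ⟨a', ha'⟩ := exists_ne a
  obtain ⟨b', hb'⟩ := exists_ne b
  have e₁ := matchColor_eq_of_ne c v k ha'
  have e₂ := matchColor_eq_of_ne c v l hb'.symm
  refine false_of_path hv hfree hkl (p₀ := v (k, a')) (p₁ := v (k, a)) (p₂ := v (l, b))
    (p₃ := v (l, b')) ?_ ?_ ?_ ?_ <;> grind [List.nodup_cons, Sym2.eq_swap]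

theorem fresh_eq_of_edge_edge {x : Fin n} (hx : x ∉ Set.range v) {k l : Fin (t + 2)}
    (hkl : k ≠ l) {a b : Fin 2} (h₁ : c s(x, v (k, a)) ∉ Set.range (matchColor c v))
    (h₂ : c s(x, v (l, b)) ∉ Set.range (matchColor c v)) :
    c s(x, v (k, a)) = c s(x, v (l, b)) := by
  by_contra hne
  obtain ⟨a', ha'⟩ := exists_ne a
  have e₁ := matchColor_eq_of_ne c v k ha'
  refine false_of_path hv hfree hkl (p₀ := v (k, a')) (p₁ := v (k, a)) (p₂ := x)
    (p₃ := v (l, b)) ?_ ?_ ?_ ?_ <;> grind [List.nodup_cons, Sym2.eq_swap]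

theorem fresh_eq_of_edge_outside {x w : Fin n} (hx : x ∉ Set.range v) (hw : w ∉ Set.range v)
    (hwx : w ≠ x) {k : Fin (t + 2)} {a : Fin 2}
    (h₁ : c s(x, v (k, a)) ∉ Set.range (matchColor c v))
    (h₂ : c s(x, w) ∉ Set.range (matchColor c v)) :
    c s(x, v (k, a)) = c s(x, w) := by
  by_contra hne
  obtain ⟨a', ha'⟩ := exists_ne a
  have e₁ := matchColor_eq_of_ne c v k ha'
  refine false_of_path_one_edge hv hfree (i := k) 0 (p₀ := v (k, a')) (p₁ := v (k, a)) (p₂ := x)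
    (p₃ := w) ?_ ?_ ?_ ?_ <;> grind [List.nodup_cons, Sym2.eq_swap]

theorem color_edge_eq_of_fresh_pair {x w w' : Fin n} (hx : x ∉ Set.range v)
    (hw : w ∉ Set.range v) (hw' : w' ∉ Set.range v) (hwx : w ≠ x) (hw'x : w' ≠ x) (hww' : w ≠ w')
    (h₁ : c s(x, w) ∉ Set.range (matchColor c v)) (h₂ : c s(x, w') ∉ Set.range (matchColor c v))
    (hne : c s(x, w) ≠ c s(x, w')) (k : Fin (t + 2)) (a : Fin 2) :
    c s(w', v (k, a)) = c s(x, w') := by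
  have hmem : c s(w', v (k, a)) = c s(x, w) ∨ c s(w', v (k, a)) = c s(x, w') := by
    by_contra hγ
    refine false_of_path_one_edge hv hfree (i := k) (c s(w', v (k, a))) (p₀ := w) (p₁ := x)
      (p₂ := w') (p₃ := v (k, a)) ?_ ?_ ?_ ?_ <;> grind [List.nodup_cons, Sym2.eq_swap]
  refine hmem.resolve_left fun h => hne ?_
  have := fresh_eq_of_edge_outside hv hfree hw' hx hw'x.symm (h ▸ h₁) (by rwa [Sym2.eq_swap])
  grind [Sym2.eq_swap]

theorem false_of_three_fresh_outside {x w₁ w₂ w₃ : Fin n} (hx : x ∉ Set.range v)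
    (hw₁ : w₁ ∉ Set.range v) (hw₂ : w₂ ∉ Set.range v) (hw₃ : w₃ ∉ Set.range v)
    (hw₁x : w₁ ≠ x) (hw₂x : w₂ ≠ x) (hw₃x : w₃ ≠ x)
    (h₁ : c s(x, w₁) ∉ Set.range (matchColor c v)) (h₂ : c s(x, w₂) ∉ Set.range (matchColor c v))
    (h₃ : c s(x, w₃) ∉ Set.range (matchColor c v))
    (hc : [c s(x, w₁), c s(x, w₂), c s(x, w₃)].Nodup) : False := by
  simp only [List.nodup_cons, List.mem_cons, List.not_mem_nil, List.nodup_nil, or_false, and_true,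
    not_or, not_false_eq_true] at hc
  have hw₁₂ : w₁ ≠ w₂ := by rintro rfl; exact hc.1.1 rfl
  have e₂ := color_edge_eq_of_fresh_pair hv hfree hx hw₁ hw₂ hw₁x hw₂x hw₁₂ h₁ h₂ hc.1.1 0 0
  have hmem : c s(w₁, w₂) = c s(x, w₁) ∨ c s(w₁, w₂) = c s(x, w₂) := by
    by_contra hγ
    refine false_of_path_one_edge hv hfree (i := 0) (c s(w₁, w₂)) (p₀ := x) (p₁ := w₁) (p₂ := w₂)
      (p₃ := v (0, 0)) ?_ ?_ ?_ ?_ <;> grind [List.nodup_cons, Sym2.eq_swap]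
  -- either way one of the paths `w₁ w₂ x w₃`, `w₂ w₁ x w₃` is rainbow and misses the matching
  rcases hmem with h | h
  · refine false_of_path_one_edge hv hfree (i := 0) 0 (p₀ := w₁) (p₁ := w₂) (p₂ := x) (p₃ := w₃)
      ?_ ?_ ?_ ?_ <;> grind [List.nodup_cons, Sym2.eq_swap]
  · refine false_of_path_one_edge hv hfree (i := 0) 0 (p₀ := w₂) (p₁ := w₁) (p₂ := x) (p₃ := w₃)
      ?_ ?_ ?_ ?_ <;> grind [List.nodup_cons, Sym2.eq_swap]

theorem false_of_three_isFreshAt {x : Fin n} (hx : x ∉ Set.range v) {φ₁ φ₂ φ₃ : ℕ}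
    (h₁ : IsFreshAt c v x φ₁) (h₂ : IsFreshAt c v x φ₂) (h₃ : IsFreshAt c v x φ₃)
    (hφ : [φ₁, φ₂, φ₃].Nodup) : False := by
  obtain ⟨f₁, w₁, hw₁, rfl⟩ := h₁
  obtain ⟨f₂, w₂, hw₂, rfl⟩ := h₂
  obtain ⟨f₃, w₃, hw₃, rfl⟩ := h₃
  have mixed : ∀ {w w'}, w ∈ Set.range v → w' ∉ Set.range v → w' ≠ x →
      c s(x, w) ∉ Set.range (matchColor c v) → c s(x, w') ∉ Set.range (matchColor c v) →
      c s(x, w) = c s(x, w') := by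
    rintro w w' ⟨⟨k, a⟩, rfl⟩ hw' hw'x h h'
    exact fresh_eq_of_edge_outside hv hfree hx hw' hw'x h h'
  simp only [List.nodup_cons, List.mem_cons, List.not_mem_nil, List.nodup_nil, or_false, and_true,
    not_or, not_false_eq_true] at hφ
  by_cases hW₁ : w₁ ∈ Set.range v <;> by_cases hW₂ : w₂ ∈ Set.range v <;>
    by_cases hW₃ : w₃ ∈ Set.range v
  · obtain ⟨⟨k₁, a₁⟩, rfl⟩ := hW₁
    obtain ⟨⟨k₂, a₂⟩, rfl⟩ := hW₂
    obtain ⟨⟨k₃, a₃⟩, rfl⟩ := hW₃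
    have same : ∀ {k l : Fin (t + 2)} {a b : Fin 2}, c s(x, v (k, a)) ∉ Set.range (matchColor c v) →
        c s(x, v (l, b)) ∉ Set.range (matchColor c v) → c s(x, v (k, a)) ≠ c s(x, v (l, b)) →
        k = l ∧ a ≠ b := fun {k l a b} h h' hne =>
      have hkl : k = l := by_contra fun hkl => hne (fresh_eq_of_edge_edge hv hfree hx hkl h h')
      ⟨hkl, by rintro rfl; exact hne (by rw [hkl])⟩
    obtain ⟨rfl, h₁₂⟩ := same f₁ f₂ hφ.1.1
    obtain ⟨rfl, h₁₃⟩ := same f₁ f₃ hφ.1.2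
    obtain ⟨-, h₂₃⟩ := same f₂ f₃ hφ.2
    exact h₂₃ ((by decide : ∀ a b c : Fin 2, a ≠ b → a ≠ c → b = c) a₁ a₂ a₃ h₁₂ h₁₃)
  · exact hφ.1.2 (mixed hW₁ hW₃ hw₃ f₁ f₃)
  · exact hφ.1.1 (mixed hW₁ hW₂ hw₂ f₁ f₂)
  · exact hφ.1.1 (mixed hW₁ hW₂ hw₂ f₁ f₂)
  · exact hφ.1.1 (mixed hW₂ hW₁ hw₁ f₂ f₁).symm
  · exact hφ.1.1 (mixed hW₂ hW₁ hw₁ f₂ f₁).symm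
  · exact hφ.1.2 (mixed hW₃ hW₁ hw₁ f₃ f₁).symm
  · exact false_of_three_fresh_outside hv hfree hx hW₁ hW₂ hW₃ hw₁ hw₂ hw₃ f₁ f₂ f₃
      (by simp [hφ])

theorem exists_isFreshAt {φ : ℕ} (hφ : φ ∈ c '' (⊤ : SimpleGraph (Fin n)).edgeSet)
    (hS : φ ∉ Set.range (matchColor c v)) : ∃ x ∉ Set.range v, IsFreshAt c v x φ := by
  obtain ⟨e, he, rfl⟩ := hφ
  induction e using Sym2.ind with
  | h x y =>
    have hxy : x ≠ y := he
    by_cases hx : x ∈ Set.range v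
    · by_cases hy : y ∈ Set.range v
      · obtain ⟨⟨k, a⟩, rfl⟩ := hx
        obtain ⟨⟨l, b⟩, rfl⟩ := hy
        by_cases hkl : k = l
        · subst hkl
          exact (hS ⟨k, (matchColor_eq_of_ne c v k fun hab => hxy (by rw [hab])).symm⟩).elim
        · exact (hS (color_cross_mem hv hfree hkl a b)).elim
      · exact ⟨y, hy, hS, x, hxy, Sym2.eq_swap ▸ rfl⟩
    · exact ⟨x, hx, hS, y, hxy.symm, rfl⟩

theorem color_eq_or_eq_matchColor {q₀ q₁ : Fin n} (hq₀ : q₀ ∉ Set.range v) (hq₁ : q₁ ∉ Set.range v)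
    (hq : q₀ ≠ q₁) {k : Fin (t + 2)} {a a' : Fin 2} (haa' : a ≠ a')
    (h : c s(q₀, v (k, a')) ∉ Set.range (matchColor c v)) :
    c s(q₁, v (k, a)) = c s(q₀, v (k, a')) ∨ c s(q₁, v (k, a)) = matchColor c v k := by
  by_contra hγ
  have e₁ := matchColor_eq_of_ne c v k haa'
  refine false_of_path_one_edge hv hfree (i := k) (c s(q₁, v (k, a))) (p₀ := q₀) (p₁ := v (k, a'))
    (p₂ := v (k, a)) (p₃ := q₁) ?_ ?_ ?_ ?_ <;> grind [List.nodup_cons, Sym2.eq_swap]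

theorem color_eq_matchColor_of_fresh_outside {y z : Fin n} (hy : y ∉ Set.range v)
    (hz : z ∉ Set.range v) (hyz : y ≠ z) (h : c s(y, z) ∉ Set.range (matchColor c v))
    {l : Fin (t + 2)} {b : Fin 2} (hne : c s(y, v (l, b)) ≠ c s(y, z)) :
    c s(y, v (l, b)) = matchColor c v l := by
  by_cases hS : c s(y, v (l, b)) ∈ Set.range (matchColor c v)
  · obtain ⟨m, hm⟩ := hS
    by_contra hml
    obtain ⟨b', hb'⟩ := exists_ne b
    have e₁ := matchColor_eq_of_ne c v l hb'.symm
    refine false_of_path hv hfree (i := l) (j := m) (by grind) (p₀ := z) (p₁ := y) (p₂ := v (l, b))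
      (p₃ := v (l, b')) ?_ ?_ ?_ ?_ <;> grind [List.nodup_cons, Sym2.eq_swap]
  · exact (hne (fresh_eq_of_edge_outside hv hfree hy hz hyz.symm hS h)).elim

theorem false_of_fresh_bridge {y z : Fin n} (hy : y ∉ Set.range v) (hz : z ∉ Set.range v)
    (hyz : y ≠ z) (h : c s(y, z) ∉ Set.range (matchColor c v)) {k l : Fin (t + 2)} (hkl : k ≠ l)
    {a b : Fin 2} (hk : c s(y, v (k, a)) = matchColor c v k)
    (hl : c s(z, v (l, b)) = matchColor c v l) : False := by
  refine false_of_path hv hfree hkl (p₀ := v (k, a)) (p₁ := y) (p₂ := z) (p₃ := v (l, b))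
    ?_ ?_ ?_ ?_ <;> grind [List.nodup_cons, Sym2.eq_swap]

section DoubleEdge

variable {u : Fin n} (hu : u ∉ Set.range v) {k : Fin (t + 2)} {a a' : Fin 2} (haa' : a ≠ a')
  (h₁ : c s(u, v (k, a)) ∉ Set.range (matchColor c v))
  (h₂ : c s(u, v (k, a')) ∉ Set.range (matchColor c v))
  (hne : c s(u, v (k, a)) ≠ c s(u, v (k, a')))
include hu h₁ h₂ hne

theorem color_mem_of_double_edge {w : Fin n} (hw : w ∉ Set.range v) (hwu : w ≠ u) :
    c s(u, w) ∈ Set.range (matchColor c v) := by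
  by_contra h
  exact hne ((fresh_eq_of_edge_outside hv hfree hu hw hwu h₁ h).trans
    (fresh_eq_of_edge_outside hv hfree hu hw hwu h₂ h).symm)

include haa' in
theorem false_of_double_edge_of_other_edge {x : Fin n} (hx : x ∉ Set.range v) (hxu : x ≠ u)
    {l : Fin (t + 2)} (hlk : l ≠ k) {b : Fin 2}
    (hψ : c s(x, v (l, b)) ∉ Set.range (matchColor c v))
    (hψ₁ : c s(x, v (l, b)) ≠ c s(u, v (k, a))) : False := by
  have hxk : c s(x, v (k, a')) = matchColor c v k := by
    refine (color_eq_or_eq_matchColor hv hfree hu hx hxu.symm haa'.symm h₁).resolve_left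
      fun h => hψ₁ ?_
    exact h ▸ (fresh_eq_of_edge_edge hv hfree hx hlk.symm (h ▸ h₁) hψ).symm
  obtain ⟨m, hm⟩ := color_mem_of_double_edge hv hfree hu h₁ h₂ hne hx hxu
  by_cases hmk : m = k
  · subst hmk
    refine false_of_path hv hfree hlk.symm (p₀ := v (m, a)) (p₁ := u) (p₂ := x) (p₃ := v (l, b))
      ?_ ?_ ?_ ?_ <;> grind [List.nodup_cons, Sym2.eq_swap]
  · refine false_of_path hv hfree (i := k) (j := m) (Ne.symm hmk) (p₀ := v (k, a')) (p₁ := x)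
      (p₂ := u) (p₃ := v (k, a)) ?_ ?_ ?_ ?_ <;> grind [List.nodup_cons, Sym2.eq_swap]

include haa' in
theorem eq_or_eq_of_double_edge {x : Fin n} (hx : x ∉ Set.range v) (hxu : x ≠ u) {ψ : ℕ}
    (hψ : IsFreshAt c v x ψ) : ψ = c s(u, v (k, a)) ∨ ψ = c s(u, v (k, a')) := by
  by_contra hψu
  push Not at hψu
  obtain ⟨hψS, w, hwx, rfl⟩ := hψ
  by_cases hw : w ∈ Set.range v
  · obtain ⟨⟨l, b⟩, rfl⟩ := hw
    by_cases hlk : l = k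
    · subst hlk
      rcases (by decide : ∀ a a' b : Fin 2, a ≠ a' → b = a ∨ b = a') a a' b haa' with rfl | rfl
      · rcases color_eq_or_eq_matchColor hv hfree hu hx hxu.symm haa' h₂ with h | h
        exacts [hψu.2 h, hψS ⟨_, h.symm⟩]
      · rcases color_eq_or_eq_matchColor hv hfree hu hx hxu.symm haa'.symm h₁ with h | h
        exacts [hψu.1 h, hψS ⟨_, h.symm⟩]
    · exact false_of_double_edge_of_other_edge hv hfree hu haa' h₁ h₂ hne hx hxu hlk hψS hψu.1
  · have hwu : w ≠ u := by
      rintro rfl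
      exact hψS (Sym2.eq_swap (a := x) ▸ color_mem_of_double_edge hv hfree hu h₁ h₂ hne hx hxu)
    have hxk : c s(x, v (k, a)) = matchColor c v k := by
      refine (color_eq_or_eq_matchColor hv hfree hu hx hxu.symm haa' h₂).resolve_left
        fun h => hψu.2 ?_
      exact h ▸ (fresh_eq_of_edge_outside hv hfree hx hw hwx (h ▸ h₂) hψS).symm
    obtain ⟨l, hlk⟩ := exists_ne k
    have hwl : c s(w, v (l, 0)) = matchColor c v l := by
      refine color_eq_matchColor_of_fresh_outside hv hfree hw hx hwx (by rwa [Sym2.eq_swap])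
        fun h => false_of_double_edge_of_other_edge hv hfree hu haa' h₁ h₂ hne hw hwu hlk
          (b := 0) ?_ ?_
      · rw [h, Sym2.eq_swap]; exact hψS
      · rw [h, Sym2.eq_swap]; exact hψu.1
    exact false_of_fresh_bridge hv hfree hx hw hwx.symm hψS hlk.symm hxk hwl

end DoubleEdge

theorem eq_of_isFreshAt_of_forall_color_eq {p : Fin n} (hp : p ∉ Set.range v) {φ : ℕ}
    (hφ : φ ∉ Set.range (matchColor c v)) (hpv : ∀ l b, c s(p, v (l, b)) = φ) {ψ : ℕ}
    (hψ : IsFreshAt c v p ψ) : ψ = φ := by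
  obtain ⟨hψS, w, hwp, rfl⟩ := hψ
  by_cases hw : w ∈ Set.range v
  · obtain ⟨⟨l, b⟩, rfl⟩ := hw
    obtain ⟨l', hl'⟩ := exists_ne l
    rw [← hpv l' 0]
    exact (fresh_eq_of_edge_edge hv hfree hp hl' ((hpv l' 0).symm ▸ hφ) hψS).symm
  · rw [← hpv 0 0]
    exact (fresh_eq_of_edge_outside hv hfree hp hw hwp ((hpv 0 0).symm ▸ hφ) hψS).symm

theorem color_ne_of_forall_color_eq {p : Fin n} (hp : p ∉ Set.range v) {φ : ℕ}
    (hφ : φ ∉ Set.range (matchColor c v)) (hpv : ∀ l b, c s(p, v (l, b)) = φ) {ψ : ℕ}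
    (hψ : ψ ∉ Set.range (matchColor c v)) (hψφ : ψ ≠ φ) (y : Fin n) (hy : y ∉ Set.range v)
    (hyp : y ≠ p) (l : Fin (t + 2)) (b : Fin 2) : c s(y, v (l, b)) ≠ ψ := by
  intro h
  obtain ⟨b', hb'⟩ := exists_ne b
  rcases color_eq_or_eq_matchColor hv hfree hp hy hyp.symm hb'.symm ((hpv l b').symm ▸ hφ)
    with h' | h'
  · exact hψφ (h.symm.trans (h'.trans (hpv l b')))
  · exact hψ ⟨l, h'.symm.trans h⟩

theorem eq_or_eq_of_double_outside {u p₁ p₂ : Fin n} (hu : u ∉ Set.range v)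
    (hp₁ : p₁ ∉ Set.range v) (hp₂ : p₂ ∉ Set.range v) (hp₁u : p₁ ≠ u) (hp₂u : p₂ ≠ u)
    (hp : p₁ ≠ p₂) (h₁ : c s(u, p₁) ∉ Set.range (matchColor c v))
    (h₂ : c s(u, p₂) ∉ Set.range (matchColor c v)) (hne : c s(u, p₁) ≠ c s(u, p₂))
    {x : Fin n} (hx : x ∉ Set.range v) (hxu : x ≠ u) {ψ : ℕ} (hψ : IsFreshAt c v x ψ) :
    ψ = c s(u, p₁) ∨ ψ = c s(u, p₂) := by
  have hp₁v : ∀ l b, c s(p₁, v (l, b)) = c s(u, p₁) :=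
    color_edge_eq_of_fresh_pair hv hfree hu hp₂ hp₁ hp₂u hp₁u hp.symm h₂ h₁ hne.symm
  by_contra hψu
  push Not at hψu
  obtain ⟨hψS, w, hwx, rfl⟩ := hψ
  have hwu : w ≠ u := by
    rintro rfl
    refine false_of_three_isFreshAt hv hfree hu ⟨h₁, p₁, hp₁u, rfl⟩ ⟨h₂, p₂, hp₂u, rfl⟩
      ⟨Sym2.eq_swap (a := x) ▸ hψS, x, hxu, rfl⟩ ?_
    grind [List.nodup_cons, Sym2.eq_swap]
  have hxp₁ : x ≠ p₁ := by
    rintro rfl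
    exact hψu.1 (eq_of_isFreshAt_of_forall_color_eq hv hfree hx h₁ hp₁v ⟨hψS, w, hwx, rfl⟩)
  have hne_ψ := color_ne_of_forall_color_eq hv hfree hp₁ h₁ hp₁v hψS hψu.1
  by_cases hw : w ∈ Set.range v
  · obtain ⟨⟨l, b⟩, rfl⟩ := hw
    exact hne_ψ x hx hxp₁ l b rfl
  have hwp₁ : w ≠ p₁ := by
    rintro rfl
    exact hψu.1 (eq_of_isFreshAt_of_forall_color_eq hv hfree hw h₁ hp₁v
      ⟨Sym2.eq_swap (a := x) ▸ hψS, x, hwx.symm, congrArg c Sym2.eq_swap⟩)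
  have hx₀ := color_eq_matchColor_of_fresh_outside hv hfree hx hw hwx.symm hψS
    (hne_ψ x hx hxp₁ 0 0)
  have hw₁ := color_eq_matchColor_of_fresh_outside hv hfree hw hx hwx
    (Sym2.eq_swap (a := x) ▸ hψS) (Sym2.eq_swap (a := x) ▸ hne_ψ w hw hwp₁ 1 0)
  exact false_of_fresh_bridge hv hfree hx hw hwx.symm hψS (by simp) hx₀ hw₁

theorem eq_or_eq_of_isFreshAt_double {u : Fin n} (hu : u ∉ Set.range v) {φ₁ φ₂ : ℕ}
    (h₁ : IsFreshAt c v u φ₁) (h₂ : IsFreshAt c v u φ₂) (hne : φ₁ ≠ φ₂) {x : Fin n}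
    (hx : x ∉ Set.range v) {ψ : ℕ} (hψ : IsFreshAt c v x ψ) : ψ = φ₁ ∨ ψ = φ₂ := by
  by_cases hxu : x = u
  · subst hxu
    by_contra h
    push Not at h
    exact false_of_three_isFreshAt hv hfree hx h₁ h₂ hψ (by simp [hne, h.1.symm, h.2.symm])
  obtain ⟨f₁, z₁, hz₁, rfl⟩ := h₁
  obtain ⟨f₂, z₂, hz₂, rfl⟩ := h₂
  by_cases hW₁ : z₁ ∈ Set.range v <;> by_cases hW₂ : z₂ ∈ Set.range v
  · obtain ⟨⟨k, a⟩, rfl⟩ := hW₁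
    obtain ⟨⟨l, b⟩, rfl⟩ := hW₂
    obtain rfl : k = l := by_contra fun hkl => hne (fresh_eq_of_edge_edge hv hfree hu hkl f₁ f₂)
    have hab : a ≠ b := by rintro rfl; exact hne rfl
    exact eq_or_eq_of_double_edge hv hfree hu hab f₁ f₂ hne hx hxu hψ
  · obtain ⟨⟨k, a⟩, rfl⟩ := hW₁
    exact (hne (fresh_eq_of_edge_outside hv hfree hu hW₂ hz₂ f₁ f₂)).elim
  · obtain ⟨⟨k, a⟩, rfl⟩ := hW₂
    exact (hne (fresh_eq_of_edge_outside hv hfree hu hW₁ hz₁ f₂ f₁).symm).elim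
  · have hz : z₁ ≠ z₂ := by rintro rfl; exact hne rfl
    exact eq_or_eq_of_double_outside hv hfree hu hW₁ hW₂ hz₁ hz₂ hz f₁ f₂ hne hx hxu hψ

theorem colorCount_le : colorCount n c ≤ n := by
  set S := Set.range (matchColor c v)
  set F := c '' (⊤ : SimpleGraph (Fin n)).edgeSet \ S
  have hS : S.ncard = t + 2 := by
    rw [Set.ncard_range_of_injective hv, Nat.card_eq_fintype_card, Fintype.card_fin]
  have hW : (Set.range v).ncard = 2 * t + 4 := by
    rw [Set.ncard_range_of_injective v.injective, Nat.card_eq_fintype_card, Fintype.card_prod,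
      Fintype.card_fin, Fintype.card_fin]
    ring
  have hWn := two_mul_le_of_embedding v
  have hcount : colorCount n c ≤ t + 2 + F.ncard := by
    rw [← hS]
    refine (Set.ncard_le_ncard (s := c '' _) (t := S ∪ F) (fun φ hφ => ?_)
      ((Set.finite_range _).union (Set.toFinite _))).trans (Set.ncard_union_le _ _)
    by_cases h : φ ∈ S
    exacts [Or.inl h, Or.inr ⟨hφ, h⟩]
  have hloc : ∀ φ ∈ F, ∃ x ∉ Set.range v, IsFreshAt c v x φ :=
    fun φ hφ => exists_isFreshAt hv hfree hφ.1 hφ.2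
  by_cases hdouble : ∃ u ∉ Set.range v, ∃ φ₁ φ₂, IsFreshAt c v u φ₁ ∧ IsFreshAt c v u φ₂ ∧ φ₁ ≠ φ₂
  · obtain ⟨u, hu, φ₁, φ₂, h₁, h₂, hne⟩ := hdouble
    have hF : F ⊆ {φ₁, φ₂} := fun φ hφ => by
      obtain ⟨x, hx, hxφ⟩ := hloc φ hφ
      exact eq_or_eq_of_isFreshAt_double hv hfree hu h₁ h₂ hne hx hxφ
    have := (Set.ncard_le_ncard hF).trans (Set.ncard_pair hne).le
    omega
  · push Not at hdouble
    have : Nonempty (Fin n) := ⟨v (0, 0)⟩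
    choose! carrier hcarrier hfresh using hloc
    have hF : F.ncard ≤ (Set.range v)ᶜ.ncard :=
      Set.ncard_le_ncard_of_injOn carrier hcarrier fun φ hφ ψ hψ h =>
        hdouble _ (hcarrier φ hφ) φ ψ (hfresh φ hφ) (h ▸ hfresh ψ hψ)
    rw [Set.ncard_compl, hW, Nat.card_eq_fintype_card, Fintype.card_fin] at hF
    omega

end RainbowMatching

theorem stmt_2_general (t n : ℕ) (ht : 1 ≤ t) :
    AR n (kP4tP2 1 t) =
      AR n (SimpleGraph.multiCopy (t + 2) (SimpleGraph.pathGraph 2)) := by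
  refine le_antisymm (AR_le fun c hc => ?_) (AR_mono (copyMatchingP4tP2 t))
  by_cases hM : HasRainbowCopy n c (multiCopy (t + 2) (pathGraph 2))
  · obtain ⟨v, hv⟩ := hasRainbowCopy_multiCopy_pathGraph_two_iff.1 hM
    have hn := two_mul_le_of_embedding v
    calc colorCount n c ≤ n := RainbowMatching.colorCount_le hv hc
      _ = colorCount n (starColoring n) := (colorCount_starColoring (by omega)).symm
      _ ≤ _ := colorCount_le_AR (starColoring_not_hasRainbowCopy (by omega))
  · exact colorCount_le_AR hM

/-- For integers `t, n` with `t ≥ 1` and `n ≥ 2t + 4`,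
`AR(n, P₄ ∪ tP₂) = AR(n, (t + 2)P₂)`. -/
theorem stmt_2 (t n : ℕ) (ht : 1 ≤ t) (hn : 2 * t + 4 ≤ n) :
    AR n (kP4tP2 1 t) =
      AR n (SimpleGraph.multiCopy (t + 2) (SimpleGraph.pathGraph 2)) :=
  stmt_2_general t n ht
end

section
/- For every integer k ≥ 2, there exists an edge-coloring of the complete graph K_{4k} using exactly (2k − 1)(4k − 3) + 1 colors that contains no rainbow copy of kP₄. (Such a coloring is obtained by rainbow-coloring a complete subgraph on 4k − 2 vertices and giving all remaining edges one further color.) -/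
/-!
Colour the clique on the first `4k - 2` vertices rainbow and every other edge with one extra
colour. A copy of `kP₄` in `K_{4k}` spans all vertices, so it contains both vertices outside the
clique; since `kP₄` has no isolated vertex and no component that is a single edge, the copy has
two distinct edges at these two vertices, and both carry the extra colour.
-/

open SimpleGraph

theorem ncard_edgesInside_top {α : Type*} (A : Set α) :
    (edgesInside ⊤ A).ncard = A.ncard.choose 2 := by
  have hA : edgesInside ⊤ A = Sym2.map (↑) '' (Sym2.diagSetᶜ : Set (Sym2 A)) := by
    ext e
    induction e using Sym2.ind with
    | _ a b =>
      simp only [edgesInside, Set.mem_image, Sym2.exists, Subtype.exists]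
      aesop
  rw [hA, Set.ncard_image_of_injective _ (Sym2.map.injective Subtype.val_injective),
    Sym2.ncard_diagSet_compl, Nat.card_coe_set_eq]

open Classical in
noncomputable def rainbowCliqueColoring {n : ℕ} (A : Set (Fin n)) (e : Sym2 (Fin n)) : ℕ :=
  if e ∈ edgesInside ⊤ A then Fintype.equivFin (Sym2 (Fin n)) e + 1 else 0

theorem rainbowCliqueColoring_image_edgeSet {n : ℕ} {A : Set (Fin n)} {x y : Fin n}
    (hx : x ∉ A) (hxy : x ≠ y) :
    rainbowCliqueColoring A '' (⊤ : SimpleGraph (Fin n)).edgeSet =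
      insert 0 ((fun e ↦ (Fintype.equivFin (Sym2 (Fin n)) e : ℕ) + 1) '' edgesInside ⊤ A) := by
  ext m
  constructor
  · rintro ⟨e, -, rfl⟩
    by_cases hA : e ∈ edgesInside ⊤ A
    · exact Or.inr ⟨e, hA, by simp [rainbowCliqueColoring, hA]⟩
    · exact Or.inl (by simp [rainbowCliqueColoring, hA])
  · rintro (rfl | ⟨e, hA, rfl⟩)
    · refine ⟨s(x, y), by simpa using hxy, ?_⟩
      simp [rainbowCliqueColoring, edgesInside, hx]
    · exact ⟨e, hA.1, by simp [rainbowCliqueColoring, hA]⟩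

theorem colorCount_rainbowCliqueColoring {n : ℕ} {A : Set (Fin n)} {x y : Fin n}
    (hx : x ∉ A) (hxy : x ≠ y) :
    colorCount n (rainbowCliqueColoring A) = A.ncard.choose 2 + 1 := by
  have hinj : Function.Injective (fun e ↦ (Fintype.equivFin (Sym2 (Fin n)) e : ℕ) + 1) :=
    (add_left_injective 1).comp (Fin.val_injective.comp (Fintype.equivFin _).injective)
  rw [colorCount, rainbowCliqueColoring_image_edgeSet hx hxy,
    Set.ncard_insert_of_notMem (by simp) (Set.toFinite _), Set.ncard_image_of_injective _ hinj,
    ncard_edgesInside_top]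

theorem rainbowCliqueColoring_mk_of_notMem {n : ℕ} {A : Set (Fin n)} {x : Fin n} (hx : x ∉ A)
    (z : Fin n) : rainbowCliqueColoring A s(x, z) = 0 := by
  simp [rainbowCliqueColoring, edgesInside, hx]

/-- Equivalently: `H` has neither isolated vertices nor components isomorphic to `K₂`. -/
def SimpleGraph.PairsCoveredByDistinctEdges {V : Type*} (H : SimpleGraph V) : Prop :=
  ∀ u v, u ≠ v → ∃ u' v', H.Adj u u' ∧ H.Adj v v' ∧ s(u, u') ≠ s(v, v')

theorem pathGraph_four_pairsCoveredByDistinctEdges :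
    (pathGraph 4).PairsCoveredByDistinctEdges := by
  simp only [PairsCoveredByDistinctEdges, pathGraph_adj, ne_eq, Sym2.eq_iff]
  decide

theorem SimpleGraph.PairsCoveredByDistinctEdges.multiCopy {V : Type*} {G : SimpleGraph V}
    (hG : G.PairsCoveredByDistinctEdges) (hdeg : ∀ a, ∃ b, G.Adj a b) (k : ℕ) :
    (G.multiCopy k).PairsCoveredByDistinctEdges := by
  rintro ⟨i, a⟩ ⟨j, b⟩ hne
  by_cases hij : i = j
  · subst hij
    obtain ⟨a', b', ha, hb, hne'⟩ := hG a b (fun h ↦ hne (by rw [h]))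
    refine ⟨(i, a'), (i, b'), ⟨rfl, ha⟩, ⟨rfl, hb⟩, ?_⟩
    simp only [ne_eq, Sym2.eq_iff, Prod.mk.injEq] at hne' ⊢
    tauto
  · obtain ⟨a', ha⟩ := hdeg a
    obtain ⟨b', hb⟩ := hdeg b
    refine ⟨(i, a'), (j, b'), ⟨rfl, ha⟩, ⟨rfl, hb⟩, ?_⟩
    simp only [ne_eq, Sym2.eq_iff, Prod.mk.injEq]
    rintro (⟨⟨h, -⟩, -⟩ | ⟨⟨h, -⟩, -⟩) <;> exact hij h

/-- A spanning copy of `H` must use one edge at `x` and a different edge at `y`. -/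
theorem not_hasRainbowCopy_of_stars_same_color {V : Type*} [Fintype V] {n : ℕ}
    {c : Sym2 (Fin n) → ℕ} {H : SimpleGraph V} (hV : Fintype.card V = n)
    (hH : H.PairsCoveredByDistinctEdges) {x y : Fin n} (hxy : x ≠ y)
    (hc : ∀ z w, c s(x, z) = c s(y, w)) : ¬ HasRainbowCopy n c H := by
  rintro ⟨f, hf⟩
  have hbij : Function.Bijective f :=
    (Fintype.bijective_iff_injective_and_card f).2 ⟨f.injective, by simp [hV]⟩
  obtain ⟨u, rfl⟩ := hbij.surjective x
  obtain ⟨v, rfl⟩ := hbij.surjective y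
  obtain ⟨u', v', hu, hv, hne⟩ := hH u v (ne_of_apply_ne f hxy)
  exact hne (hf hu hv (hc (f u') (f v')))

theorem choose_two_four_mul_sub_two (k : ℕ) (hk : 1 ≤ k) :
    (4 * k - 2).choose 2 = (2 * k - 1) * (4 * k - 3) := by
  obtain ⟨j, rfl⟩ := Nat.exists_eq_add_of_le hk
  rw [Nat.choose_two_right, show 4 * (1 + j) - 2 = 2 * (2 * j + 1) by omega,
    show 2 * (2 * j + 1) - 1 = 4 * (1 + j) - 3 by omega, mul_assoc,
    Nat.mul_div_cancel_left _ two_pos, show 2 * (1 + j) - 1 = 2 * j + 1 by omega]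

/-- For every integer `k ≥ 2`, there is an edge-coloring of `K_{4k}` using
exactly `(2k - 1)(4k - 3) + 1` colors with no rainbow copy of `kP₄`. -/
theorem stmt_8 (k : ℕ) (hk : 2 ≤ k) :
    ∃ c : Sym2 (Fin (4 * k)) → ℕ,
      colorCount (4 * k) c = (2 * k - 1) * (4 * k - 3) + 1 ∧
      ¬ HasRainbowCopy (4 * k) c
        (SimpleGraph.multiCopy k (SimpleGraph.pathGraph 4)) := by
  let x : Fin (4 * k) := ⟨4 * k - 2, by omega⟩
  let y : Fin (4 * k) := ⟨4 * k - 1, by omega⟩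
  have hxy : x ≠ y := by simp only [x, y, ne_eq, Fin.ext_iff]; omega
  have hy : y ∉ Set.Iio x := by simp only [x, y, Set.mem_Iio, Fin.lt_def]; omega
  refine ⟨rainbowCliqueColoring (Set.Iio x), ?_, ?_⟩
  · rw [colorCount_rainbowCliqueColoring (lt_irrefl x) hxy, ← Finset.coe_Iio,
      Set.ncard_coe_finset, Fin.card_Iio, choose_two_four_mul_sub_two k (by omega)]
  · refine not_hasRainbowCopy_of_stars_same_color (by simp [mul_comm])
      (pathGraph_four_pairsCoveredByDistinctEdges.multiCopy ?_ k) hxy fun z w ↦ ?_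
    · simp only [pathGraph_adj]
      decide
    · rw [rainbowCliqueColoring_mk_of_notMem (lt_irrefl x), rainbowCliqueColoring_mk_of_notMem hy]
end

section
/- It holds that AR(4, P₄) = AR(4, 2P₂), and for every integer n ≥ 5, AR(n, P₄) = AR(n, 2P₂) + 1. -/
/-!
For `n ≥ 5`, a colouring of `K_n` without a rainbow `2P₂` gives disjoint edges equal colours;
since any two edges meeting in a vertex are both disjoint from a third edge, and any two edges
are joined through a fifth vertex by a chain of edges meeting pairwise, it is monochromatic.
Without a rainbow `P₄` and for `n ≥ 5` there is no rainbow triangle, and then two adjacent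
edges with distinct colours `A`, `B` force every edge into `{A, B}`: so at most two colours,
attained by colouring a single edge differently. On `K₄`, if each of the three perfect
matchings is monochromatic there are at most three colours; otherwise a matching with two
colours forces, through the four `P₄`s having it as end edges, the other four edges into
those two colours. Colouring each perfect matching by its own colour attains three.
-/

open SimpleGraph

theorem edgeSet_pathGraph_four : (pathGraph 4).edgeSet = {s(0, 1), s(1, 2), s(2, 3)} := by
  ext e
  induction e using Sym2.ind with
  | _ a b => fin_cases a <;> fin_cases b <;> simp [pathGraph_adj, Sym2.eq_swap]

theorem edgeSet_multiCopy_two_pathGraph_two :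
    (multiCopy 2 (pathGraph 2)).edgeSet = {s((0, 0), (0, 1)), s((1, 0), (1, 1))} := by
  ext e
  induction e using Sym2.ind with
  | _ a b =>
    rcases a with ⟨i, j⟩; rcases b with ⟨k, l⟩
    fin_cases i <;> fin_cases j <;> fin_cases k <;> fin_cases l <;>
      simp [multiCopy, pathGraph_adj, Sym2.eq_swap]

section
variable {n : ℕ} {c : Sym2 (Fin n) → ℕ}

theorem hasRainbowCopy_pathGraph_four_iff :
    HasRainbowCopy n c (pathGraph 4) ↔ ∃ p q r s : Fin n,
      p ≠ q ∧ p ≠ r ∧ p ≠ s ∧ q ≠ r ∧ q ≠ s ∧ r ≠ s ∧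
      c s(p, q) ≠ c s(q, r) ∧ c s(q, r) ≠ c s(r, s) ∧ c s(p, q) ≠ c s(r, s) := by
  constructor
  · rintro ⟨f, hf⟩
    rw [edgeSet_pathGraph_four] at hf
    refine ⟨f 0, f 1, f 2, f 3, ?_⟩
    simp_all [Set.injOn_insert, f.injective.ne_iff, eq_comm]
  · rintro ⟨p, q, r, s, hpq, hpr, hps, hqr, hqs, hrs, h₁, h₂, h₃⟩
    refine ⟨⟨![p, q, r, s], ?_⟩, ?_⟩
    · intro i j hij
      fin_cases i <;> fin_cases j <;> simp_all [eq_comm]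
    · rw [edgeSet_pathGraph_four]
      simpa [Set.injOn_insert] using ⟨h₂, h₁.symm, h₃.symm⟩

theorem hasRainbowCopy_multiCopy_two_pathGraph_two_iff :
    HasRainbowCopy n c (multiCopy 2 (pathGraph 2)) ↔ ∃ p q r s : Fin n,
      p ≠ q ∧ p ≠ r ∧ p ≠ s ∧ q ≠ r ∧ q ≠ s ∧ r ≠ s ∧ c s(p, q) ≠ c s(r, s) := by
  constructor
  · rintro ⟨f, hf⟩
    rw [edgeSet_multiCopy_two_pathGraph_two] at hf
    refine ⟨f (0, 0), f (0, 1), f (1, 0), f (1, 1), ?_⟩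
    simp_all [Set.injOn_insert, f.injective.ne_iff]
  · rintro ⟨p, q, r, s, hpq, hpr, hps, hqr, hqs, hrs, h⟩
    refine ⟨⟨fun x => ![![p, q], ![r, s]] x.1 x.2, ?_⟩, ?_⟩
    · rintro ⟨i, j⟩ ⟨k, l⟩ hij
      fin_cases i <;> fin_cases j <;> fin_cases k <;> fin_cases l <;> simp_all [eq_comm]
    · rw [edgeSet_multiCopy_two_pathGraph_two]
      simp_all [Set.injOn_insert]

theorem HasRainbowCopy.multiCopy_two_pathGraph_two_of_pathGraph_four
    (h : HasRainbowCopy n c (pathGraph 4)) : HasRainbowCopy n c (multiCopy 2 (pathGraph 2)) := by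
  obtain ⟨p, q, r, s, hpq, hpr, hps, hqr, hqs, hrs, -, -, h⟩ :=
    hasRainbowCopy_pathGraph_four_iff.1 h
  exact hasRainbowCopy_multiCopy_two_pathGraph_two_iff.2
    ⟨p, q, r, s, hpq, hpr, hps, hqr, hqs, hrs, h⟩

theorem color_eq_of_not_hasRainbowCopy_multiCopy
    (h : ¬ HasRainbowCopy n c (multiCopy 2 (pathGraph 2))) {p q r s : Fin n}
    (hpq : p ≠ q) (hpr : p ≠ r) (hps : p ≠ s) (hqr : q ≠ r) (hqs : q ≠ s) (hrs : r ≠ s) :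
    c s(p, q) = c s(r, s) := by
  by_contra hne
  exact h (hasRainbowCopy_multiCopy_two_pathGraph_two_iff.2
    ⟨p, q, r, s, hpq, hpr, hps, hqr, hqs, hrs, hne⟩)

section NoRainbowPath

variable (h : ¬ HasRainbowCopy n c (pathGraph 4)) {p q r s : Fin n}
  (hpq : p ≠ q) (hpr : p ≠ r) (hps : p ≠ s) (hqr : q ≠ r) (hqs : q ≠ s) (hrs : r ≠ s)
include h hpq hpr hps hqr hqs hrs

theorem color_last_eq_of_not_hasRainbowCopy_pathGraph (hne : c s(p, q) ≠ c s(q, r)) :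
    c s(r, s) = c s(p, q) ∨ c s(r, s) = c s(q, r) := by
  by_contra! h'
  exact h (hasRainbowCopy_pathGraph_four_iff.2
    ⟨p, q, r, s, hpq, hpr, hps, hqr, hqs, hrs, hne, h'.2.symm, h'.1.symm⟩)

theorem color_middle_eq_of_not_hasRainbowCopy_pathGraph (hne : c s(p, q) ≠ c s(r, s)) :
    c s(q, r) = c s(p, q) ∨ c s(q, r) = c s(r, s) := by
  by_contra! h'
  exact h (hasRainbowCopy_pathGraph_four_iff.2
    ⟨p, q, r, s, hpq, hpr, hps, hqr, hqs, hrs, h'.1.symm, h'.2, hne⟩)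

end NoRainbowPath

theorem Fin.exists_notMem_of_card_lt (T : Finset (Fin n)) (hT : T.card < n) :
    ∃ x : Fin n, x ∉ T := by
  obtain ⟨x, -, hx⟩ := Finset.exists_mem_notMem_of_card_lt_card (s := T) (t := Finset.univ)
    (by simpa)
  exact ⟨x, hx⟩

theorem Fin.exists_ne_notMem_of_card_add_two_le (T : Finset (Fin n)) (hT : T.card + 2 ≤ n) :
    ∃ x y : Fin n, x ≠ y ∧ x ∉ T ∧ y ∉ T := by
  obtain ⟨x, hx⟩ := Fin.exists_notMem_of_card_lt T (by omega)
  obtain ⟨y, hy⟩ := Fin.exists_notMem_of_card_lt (insert x T)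
    ((Finset.card_insert_le x T).trans_lt (by omega))
  rw [Finset.mem_insert, not_or] at hy
  exact ⟨x, y, Ne.symm hy.1, hx, hy.2⟩

theorem colorCount_le_card (S : Finset ℕ) (hmem : ∀ x y : Fin n, x ≠ y → c s(x, y) ∈ S) :
    colorCount n c ≤ S.card := by
  rw [← Set.ncard_coe_finset]
  refine Set.ncard_le_ncard ?_ S.finite_toSet
  rintro _ ⟨e, he, rfl⟩
  induction e using Sym2.ind with
  | _ x y => exact hmem x y (by simpa using he)

theorem colorCount_eq_card {S : Finset ℕ} (hmem : ∀ x y : Fin n, x ≠ y → c s(x, y) ∈ S)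
    (hsurj : ∀ k ∈ S, ∃ x y : Fin n, x ≠ y ∧ c s(x, y) = k) : colorCount n c = S.card := by
  refine le_antisymm (colorCount_le_card S hmem) ?_
  rw [← Set.ncard_coe_finset]
  refine Set.ncard_le_ncard ?_ (Set.toFinite _)
  intro k hk
  obtain ⟨x, y, hxy, rfl⟩ := hsurj k hk
  exact ⟨s(x, y), by simpa using hxy, rfl⟩

theorem colorCount_le_one (h : ∀ p q x y : Fin n, p ≠ q → x ≠ y → c s(p, q) = c s(x, y)) :
    colorCount n c ≤ 1 := by
  refine (Set.ncard_le_one (Set.toFinite _)).2 ?_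
  rintro _ ⟨e, he, rfl⟩ _ ⟨e', he', rfl⟩
  induction e using Sym2.ind with
  | _ p q =>
    induction e' using Sym2.ind with
    | _ x y => exact h p q x y (by simpa using he) (by simpa using he')

theorem color_eq_of_forall_color_eq_of_adj (hn : 5 ≤ n)
    (hadj : ∀ p q r : Fin n, q ≠ p → r ≠ p → c s(p, q) = c s(p, r))
    {p q x y : Fin n} (hpq : p ≠ q) (hxy : x ≠ y) : c s(p, q) = c s(x, y) := by
  obtain ⟨z, hz⟩ := Fin.exists_notMem_of_card_lt {p, q, x, y}
    (Finset.card_le_four.trans_lt (by omega))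
  simp only [Finset.mem_insert, Finset.mem_singleton, not_or] at hz
  obtain ⟨hzp, hzq, hzx, hzy⟩ := hz
  calc c s(p, q) = c s(p, z) := hadj p q z hpq.symm hzp
    _ = c s(z, x) := by rw [Sym2.eq_swap]; exact hadj z p x (Ne.symm hzp) (Ne.symm hzx)
    _ = c s(x, y) := by rw [Sym2.eq_swap]; exact hadj x z y hzx hxy.symm

theorem colorCount_le_one_of_not_hasRainbowCopy_multiCopy (hn : 5 ≤ n)
    (h : ¬ HasRainbowCopy n c (multiCopy 2 (pathGraph 2))) : colorCount n c ≤ 1 := by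
  refine colorCount_le_one fun _ _ _ _ hpq hxy =>
    color_eq_of_forall_color_eq_of_adj hn ?_ hpq hxy
  intro p q r hq hr
  obtain ⟨x, y, hxy, hx, hy⟩ := Fin.exists_ne_notMem_of_card_add_two_le {p, q, r}
    (by have := Finset.card_le_three (a := p) (b := q) (c := r); omega)
  simp only [Finset.mem_insert, Finset.mem_singleton, not_or] at hx hy
  have hq' := color_eq_of_not_hasRainbowCopy_multiCopy h hq.symm (Ne.symm hx.1) (Ne.symm hy.1)
    (Ne.symm hx.2.1) (Ne.symm hy.2.1) hxy
  have hr' := color_eq_of_not_hasRainbowCopy_multiCopy h hr.symm (Ne.symm hx.1) (Ne.symm hy.1)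
    (Ne.symm hx.2.2) (Ne.symm hy.2.2) hxy
  rw [hq', hr']

theorem AR_eq_of_forall_le {V : Type*} {H : SimpleGraph V} {k : ℕ} (hc : colorCount n c = k)
    (hH : ¬ HasRainbowCopy n c H)
    (hle : ∀ c', ¬ HasRainbowCopy n c' H → colorCount n c' ≤ k) : AR n H = k :=
  IsGreatest.csSup_eq ⟨⟨c, hc, hH⟩, by rintro m ⟨c', rfl, hc'⟩; exact hle c' hc'⟩

theorem color_eq_opposite_of_rainbow_triangle (h : ¬ HasRainbowCopy n c (pathGraph 4))
    {u v w z : Fin n} (huv : u ≠ v) (huw : u ≠ w) (hvw : v ≠ w) (hzu : z ≠ u) (hzv : z ≠ v)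
    (hzw : z ≠ w) (h₁ : c s(u, v) ≠ c s(v, w)) (h₂ : c s(v, w) ≠ c s(u, w))
    (h₃ : c s(u, v) ≠ c s(u, w)) : c s(u, z) = c s(v, w) := by
  have e₁ := color_last_eq_of_not_hasRainbowCopy_pathGraph h hvw.symm huw.symm hzw.symm
    huv.symm hzv.symm hzu.symm (by rwa [Sym2.eq_swap, ne_comm, Sym2.eq_swap])
  have e₂ := color_last_eq_of_not_hasRainbowCopy_pathGraph h hvw huv.symm hzv.symm huw.symm
    hzw.symm hzu.symm (by rwa [Sym2.eq_swap (a := w)])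
  simp only [Sym2.eq_swap (a := w), Sym2.eq_swap (a := v) (b := u)] at e₁ e₂
  omega

-- Two vertices outside a rainbow triangle see each vertex of it in the colour of the opposite
-- side, which leaves no colour for the edge between them.
theorem color_triangle_eq_of_not_hasRainbowCopy_pathGraph (hn : 5 ≤ n)
    (h : ¬ HasRainbowCopy n c (pathGraph 4)) {u v w : Fin n} (huv : u ≠ v) (huw : u ≠ w)
    (hvw : v ≠ w) (hne : c s(u, v) ≠ c s(v, w)) :
    c s(u, w) = c s(u, v) ∨ c s(u, w) = c s(v, w) := by
  by_contra! h'
  obtain ⟨x, y, hxy, hx, hy⟩ := Fin.exists_ne_notMem_of_card_add_two_le {u, v, w}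
    (by have := Finset.card_le_three (a := u) (b := v) (c := w); omega)
  simp only [Finset.mem_insert, Finset.mem_singleton, not_or] at hx hy
  obtain ⟨hxu, hxv, hxw⟩ := hx
  obtain ⟨hyu, hyv, hyw⟩ := hy
  have hux := color_eq_opposite_of_rainbow_triangle h huv huw hvw hxu hxv hxw hne h'.2.symm
    h'.1.symm
  have hvx := color_eq_opposite_of_rainbow_triangle h huv.symm hvw huw hxv hxu hxw
    (by simpa only [Sym2.eq_swap, ne_comm] using h'.1) h'.2
    (by simpa only [Sym2.eq_swap] using hne)
  have hvy := color_eq_opposite_of_rainbow_triangle h huv.symm hvw huw hyv hyu hyw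
    (by simpa only [Sym2.eq_swap, ne_comm] using h'.1) h'.2
    (by simpa only [Sym2.eq_swap] using hne)
  have hwy := color_eq_opposite_of_rainbow_triangle h huw.symm hvw.symm huv hyw hyu hyv
    (by simpa only [Sym2.eq_swap, ne_comm] using h'.1) (by simpa only [Sym2.eq_swap] using hne)
    (by simpa only [Sym2.eq_swap] using h'.2)
  have m₁ := color_middle_eq_of_not_hasRainbowCopy_pathGraph h (Ne.symm hxu) (Ne.symm hyu) huv
    hxy hxv hyv (by rw [hux, Sym2.eq_swap (a := y), hvy]; exact h'.2.symm)
  have m₂ := color_middle_eq_of_not_hasRainbowCopy_pathGraph h (Ne.symm hxu) (Ne.symm hyu) huw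
    hxy hxw hyw (by rw [hux, Sym2.eq_swap (a := y), hwy]; exact hne.symm)
  have m₃ := color_middle_eq_of_not_hasRainbowCopy_pathGraph h (Ne.symm hxv) (Ne.symm hyv) hvw
    hxy hxw hyw (by rw [hvx, Sym2.eq_swap (a := y), hwy]; exact h'.1)
  rw [hux, Sym2.eq_swap (a := y), hvy] at m₁
  rw [hux, Sym2.eq_swap (a := y), hwy] at m₂
  rw [hvx, Sym2.eq_swap (a := y), hwy] at m₃
  omega

theorem color_star_eq_of_not_hasRainbowCopy_pathGraph (hn : 5 ≤ n)
    (h : ¬ HasRainbowCopy n c (pathGraph 4)) {u v w : Fin n} (huv : u ≠ v) (huw : u ≠ w)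
    (hvw : v ≠ w) (hne : c s(u, v) ≠ c s(v, w)) {x : Fin n} (hxv : x ≠ v) :
    c s(v, x) = c s(u, v) ∨ c s(v, x) = c s(v, w) := by
  by_cases hxu : x = u
  · rw [hxu, Sym2.eq_swap]; exact Or.inl rfl
  by_cases hxw : x = w
  · rw [hxw]; exact Or.inr rfl
  rcases color_triangle_eq_of_not_hasRainbowCopy_pathGraph hn h huv huw hvw hne with huw' | huw'
  · have := color_last_eq_of_not_hasRainbowCopy_pathGraph h huw huv (Ne.symm hxu) hvw.symm
      (Ne.symm hxw) hxv.symm (by rw [Sym2.eq_swap (a := w), huw']; exact hne)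
    rwa [Sym2.eq_swap (a := w), huw'] at this
  · have := color_last_eq_of_not_hasRainbowCopy_pathGraph h huw.symm hvw.symm (Ne.symm hxw) huv
      (Ne.symm hxu) hxv.symm (by rw [Sym2.eq_swap (a := w), huw']; exact hne.symm)
    rwa [Sym2.eq_swap (a := w), huw', or_comm] at this

theorem color_eq_of_not_hasRainbowCopy_pathGraph (hn : 5 ≤ n)
    (h : ¬ HasRainbowCopy n c (pathGraph 4)) {u v w : Fin n} (huv : u ≠ v) (huw : u ≠ w)
    (hvw : v ≠ w) (hne : c s(u, v) ≠ c s(v, w)) {x y : Fin n} (hxy : x ≠ y) :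
    c s(x, y) = c s(u, v) ∨ c s(x, y) = c s(v, w) := by
  have star := fun {z : Fin n} (hz : z ≠ v) =>
    color_star_eq_of_not_hasRainbowCopy_pathGraph hn h huv huw hvw hne hz
  by_cases hxv : x = v
  · subst hxv; exact star hxy.symm
  by_cases hyv : y = v
  · subst hyv; rw [Sym2.eq_swap]; exact star hxy
  -- `xy` closes a triangle at `v`, or it ends a `P₄` `t v x y` with `c s(t, v) ≠ c s(v, x)`.
  by_cases hxy' : c s(x, v) = c s(v, y)
  · obtain ⟨t, htv, htx, hty⟩ : ∃ t, t ≠ v ∧ c s(t, v) ≠ c s(v, x) ∧ c s(t, v) ≠ c s(v, y) := by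
      by_cases hxu : c s(v, x) = c s(u, v)
      · exact ⟨w, hvw.symm, by rw [hxu, Sym2.eq_swap (a := w)]; exact hne.symm, by
          rw [← hxy', Sym2.eq_swap (a := x), hxu, Sym2.eq_swap (a := w)]; exact hne.symm⟩
      · exact ⟨u, huv, fun e => hxu e.symm, by
          rw [← hxy', Sym2.eq_swap (a := x)]; exact fun e => hxu e.symm⟩
    have htx' : t ≠ x := fun e => htx (by rw [e, Sym2.eq_swap])
    have hty' : t ≠ y := fun e => hty (by rw [e, Sym2.eq_swap, ← hxy', Sym2.eq_swap])
    rcases color_last_eq_of_not_hasRainbowCopy_pathGraph h htv htx' hty' (Ne.symm hxv) (Ne.symm hyv)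
      hxy htx with e | e <;> rw [e]
    · rw [Sym2.eq_swap]; exact star htv
    · exact star hxv
  · rcases color_triangle_eq_of_not_hasRainbowCopy_pathGraph hn h hxv hxy (Ne.symm hyv) hxy'
      with e | e <;> rw [e]
    · rw [Sym2.eq_swap]; exact star hxv
    · exact star hyv

theorem colorCount_le_two_of_not_hasRainbowCopy_pathGraph (hn : 5 ≤ n)
    (h : ¬ HasRainbowCopy n c (pathGraph 4)) : colorCount n c ≤ 2 := by
  by_cases hadj : ∀ p q r : Fin n, q ≠ p → r ≠ p → c s(p, q) = c s(p, r)
  · exact (colorCount_le_one fun p q x y hpq hxy =>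
      color_eq_of_forall_color_eq_of_adj hn hadj hpq hxy).trans one_le_two
  push Not at hadj
  obtain ⟨v, u, w, huv, hwv, hne⟩ := hadj
  have huw : u ≠ w := fun e => hne (by rw [e])
  refine (colorCount_le_card {c s(u, v), c s(v, w)} fun x y hxy => ?_).trans Finset.card_le_two
  simpa using
    color_eq_of_not_hasRainbowCopy_pathGraph hn h huv huw hwv.symm (by rwa [Sym2.eq_swap]) hxy

theorem color_mem_of_forall_eq_or_eq {p q r s : Fin n}
    (hcover : ∀ x, x = p ∨ x = q ∨ x = r ∨ x = s) {S : Set ℕ} (hpq : c s(p, q) ∈ S)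
    (hpr : c s(p, r) ∈ S) (hps : c s(p, s) ∈ S) (hqr : c s(q, r) ∈ S) (hqs : c s(q, s) ∈ S)
    (hrs : c s(r, s) ∈ S) {x y : Fin n} (hxy : x ≠ y) : c s(x, y) ∈ S := by
  rcases hcover x with rfl | rfl | rfl | rfl <;> rcases hcover y with rfl | rfl | rfl | rfl <;>
    first | exact absurd rfl hxy | assumption | rwa [Sym2.eq_swap]

end

theorem Fin.eq_or_eq_or_eq_or_eq_of_four {p q r s : Fin 4} (hpq : p ≠ q) (hpr : p ≠ r)
    (hps : p ≠ s) (hqr : q ≠ r) (hqs : q ≠ s) (hrs : r ≠ s) (x : Fin 4) :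
    x = p ∨ x = q ∨ x = r ∨ x = s := by
  omega

theorem colorCount_le_three_of_not_hasRainbowCopy_multiCopy_four {c : Sym2 (Fin 4) → ℕ}
    (h : ¬ HasRainbowCopy 4 c (multiCopy 2 (pathGraph 2))) : colorCount 4 c ≤ 3 := by
  have h₁ : c s(2, 3) = c s(0, 1) := color_eq_of_not_hasRainbowCopy_multiCopy h
    (by decide) (by decide) (by decide) (by decide) (by decide) (by decide)
  have h₂ : c s(1, 3) = c s(0, 2) := color_eq_of_not_hasRainbowCopy_multiCopy h
    (by decide) (by decide) (by decide) (by decide) (by decide) (by decide)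
  have h₃ : c s(1, 2) = c s(0, 3) := color_eq_of_not_hasRainbowCopy_multiCopy h
    (by decide) (by decide) (by decide) (by decide) (by decide) (by decide)
  refine (colorCount_le_card {c s(0, 1), c s(0, 2), c s(0, 3)} fun x y hxy => ?_).trans
    Finset.card_le_three
  refine color_mem_of_forall_eq_or_eq (p := 0) (q := 1) (r := 2) (s := 3) (by decide)
    ?_ ?_ ?_ ?_ ?_ ?_ hxy <;> simp [h₁, h₂, h₃]

theorem colorCount_le_three_of_not_hasRainbowCopy_pathGraph_four {c : Sym2 (Fin 4) → ℕ}
    (h : ¬ HasRainbowCopy 4 c (pathGraph 4)) : colorCount 4 c ≤ 3 := by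
  by_cases hm : HasRainbowCopy 4 c (multiCopy 2 (pathGraph 2))
  · obtain ⟨p, q, r, s, hpq, hpr, hps, hqr, hqs, hrs, hne⟩ :=
      hasRainbowCopy_multiCopy_two_pathGraph_two_iff.1 hm
    have hne' : c s(q, p) ≠ c s(s, r) := by rwa [Sym2.eq_swap, Sym2.eq_swap (a := s)]
    have eqr := color_middle_eq_of_not_hasRainbowCopy_pathGraph h hpq hpr hps hqr hqs hrs hne
    have eps := color_middle_eq_of_not_hasRainbowCopy_pathGraph h hpq.symm hqs hqr hps hpr
      hrs.symm hne'
    have epr := color_middle_eq_of_not_hasRainbowCopy_pathGraph h hpq.symm hqr hqs hpr hps hrs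
      (by rwa [Sym2.eq_swap])
    have eqs := color_middle_eq_of_not_hasRainbowCopy_pathGraph h hpq hps hpr hqs hqr hrs.symm
      (by rwa [Sym2.eq_swap (a := s)])
    rw [Sym2.eq_swap (a := q)] at eps epr
    rw [Sym2.eq_swap (a := s)] at eps eqs
    refine (colorCount_le_card {c s(p, q), c s(r, s)} fun x y hxy => ?_).trans
      (Finset.card_le_two.trans (by norm_num))
    refine color_mem_of_forall_eq_or_eq
      (Fin.eq_or_eq_or_eq_or_eq_of_four hpq hpr hps hqr hqs hrs) ?_ ?_ ?_ ?_ ?_ ?_ hxy <;> simp [*]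
  · exact colorCount_le_three_of_not_hasRainbowCopy_multiCopy_four hm

theorem exists_colorCount_eq_one_not_hasRainbowCopy_multiCopy {n : ℕ} (hn : 2 ≤ n) :
    ∃ c : Sym2 (Fin n) → ℕ, colorCount n c = 1 ∧
      ¬ HasRainbowCopy n c (multiCopy 2 (pathGraph 2)) := by
  refine ⟨fun _ => 0, colorCount_eq_card (S := {0}) (by simp) ?_, ?_⟩
  · simp only [Finset.mem_singleton, forall_eq]
    exact ⟨⟨0, by omega⟩, ⟨1, by omega⟩, by simp, trivial⟩
  · rw [hasRainbowCopy_multiCopy_two_pathGraph_two_iff]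
    simp

theorem exists_colorCount_eq_two_not_hasRainbowCopy_pathGraph {n : ℕ} (hn : 3 ≤ n) :
    ∃ c : Sym2 (Fin n) → ℕ, colorCount n c = 2 ∧ ¬ HasRainbowCopy n c (pathGraph 4) := by
  let a : Fin n := ⟨0, by omega⟩
  let b : Fin n := ⟨1, by omega⟩
  let d : Fin n := ⟨2, by omega⟩
  refine ⟨fun e => if e = s(a, b) then 1 else 0, colorCount_eq_card (S := {0, 1}) ?_ ?_, ?_⟩
  · intro x y _
    split_ifs <;> simp
  · simp only [Finset.mem_insert, Finset.mem_singleton, forall_eq_or_imp, forall_eq]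
    refine ⟨⟨a, d, by simp [a, d], by simp [a, b, d]⟩, ⟨a, b, by simp [a, b], by simp⟩⟩
  · rw [hasRainbowCopy_pathGraph_four_iff]
    rintro ⟨p, q, r, s, -, -, -, -, -, -, h₁, h₂, h₃⟩
    split_ifs at h₁ h₂ h₃ <;> omega

/-- The three perfect matchings of `K₄` get one colour each: `a ^^^ b = c ^^^ d` whenever
`{a, b, c, d} = {0, 1, 2, 3}`. -/
def matchingColoring : Sym2 (Fin 4) → ℕ :=
  Sym2.lift ⟨fun a b => a.val ^^^ b.val, fun _ _ => Nat.xor_comm _ _⟩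

theorem colorCount_matchingColoring : colorCount 4 matchingColoring = 3 := by
  refine colorCount_eq_card (S := {1, 2, 3}) (by decide) ?_
  simp only [Finset.mem_insert, Finset.mem_singleton, forall_eq_or_imp, forall_eq]
  exact ⟨⟨0, 1, by decide, rfl⟩, ⟨0, 2, by decide, rfl⟩, ⟨0, 3, by decide, rfl⟩⟩

theorem not_hasRainbowCopy_multiCopy_matchingColoring :
    ¬ HasRainbowCopy 4 matchingColoring (multiCopy 2 (pathGraph 2)) := by
  rw [hasRainbowCopy_multiCopy_two_pathGraph_two_iff]
  decide

theorem AR_pathGraph_four_of_five_le {n : ℕ} (hn : 5 ≤ n) : AR n (pathGraph 4) = 2 :=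
  have ⟨_, hc, hH⟩ := exists_colorCount_eq_two_not_hasRainbowCopy_pathGraph (n := n) (by omega)
  AR_eq_of_forall_le hc hH fun _ => colorCount_le_two_of_not_hasRainbowCopy_pathGraph hn

theorem AR_multiCopy_of_five_le {n : ℕ} (hn : 5 ≤ n) : AR n (multiCopy 2 (pathGraph 2)) = 1 :=
  have ⟨_, hc, hH⟩ := exists_colorCount_eq_one_not_hasRainbowCopy_multiCopy (n := n) (by omega)
  AR_eq_of_forall_le hc hH fun _ => colorCount_le_one_of_not_hasRainbowCopy_multiCopy hn

theorem AR_four_pathGraph_four : AR 4 (pathGraph 4) = 3 :=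
  AR_eq_of_forall_le colorCount_matchingColoring
    (mt HasRainbowCopy.multiCopy_two_pathGraph_two_of_pathGraph_four
      not_hasRainbowCopy_multiCopy_matchingColoring)
    fun _ => colorCount_le_three_of_not_hasRainbowCopy_pathGraph_four

theorem AR_four_multiCopy : AR 4 (multiCopy 2 (pathGraph 2)) = 3 :=
  AR_eq_of_forall_le colorCount_matchingColoring not_hasRainbowCopy_multiCopy_matchingColoring
    fun _ => colorCount_le_three_of_not_hasRainbowCopy_multiCopy_four

/-- `AR(4, P₄) = AR(4, 2P₂)`, and for every `n ≥ 5`,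
`AR(n, P₄) = AR(n, 2P₂) + 1`. -/
theorem stmt_11 :
    AR 4 (SimpleGraph.pathGraph 4) =
      AR 4 (SimpleGraph.multiCopy 2 (SimpleGraph.pathGraph 2)) ∧
    ∀ n : ℕ, 5 ≤ n →
      AR n (SimpleGraph.pathGraph 4) =
        AR n (SimpleGraph.multiCopy 2 (SimpleGraph.pathGraph 2)) + 1 :=
  ⟨by rw [AR_four_pathGraph_four, AR_four_multiCopy], fun _ hn => by
    rw [AR_pathGraph_four_of_five_le hn, AR_multiCopy_of_five_le hn]⟩
end

section
/- Let t ≥ 2 and n ≥ 2t + 4 be integers, let c be an edge-coloring of K_n that contains no rainbow copy of P₄ ∪ tP₂, let H be a rainbow subgraph of K_n isomorphic to (t + 2)P₂, let G be a rainbow spanning subgraph of K_n whose edge set contains E(H), and set V' = V(K_n) ∖ V(H). Then the number of edges of G having at least one endpoint in V' is at most 2|V'| = 2n − 4t − 8; that is, |E(G[V'])| + |[V(H), V']_G| ≤ 2n − 4t − 8. -/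
/-!
Every vertex `v` outside `H` has degree at most `2` in `G`; summing over `V'` bounds the edges of
`G` meeting `V'` by `2|V'|`. If `v` had three `G`-neighbours, we find a rainbow path `P₄` that
spoils (shares a vertex or a colour with) at most two edges of `H`, and the other `t` edges of `H`
complete a rainbow `P₄ ∪ tP₂`. If a neighbour `x` of `v` lies on an edge `wx` of `H`, the path
`w x v y` for another neighbour `y ≠ w` does this. If the neighbours `x, y, z` all lie outside `H`,
excluding the paths `r v p q` and `r v q p` forces `c(pq) = c(rv)` for every ordering; for an
edge `ww'` of `H`, excluding `w' w x v` and `w' w x y` then forces `c(wx) = c(ww')`, and `y v x w`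
is a rainbow path.
-/

open SimpleGraph Function

namespace SimpleGraph

lemma exists_eq_castSucc_succ_of_pathGraph_adj {m : ℕ} {a b : Fin (m + 1)}
    (h : (pathGraph (m + 1)).Adj a b) : ∃ l : Fin m, s(a, b) = s(l.castSucc, l.succ) := by
  rw [pathGraph_adj] at h
  rcases h with h | h
  · exact ⟨⟨a, by omega⟩, by rw [Sym2.eq_iff]; left; constructor <;> ext <;> simp; omega⟩
  · exact ⟨⟨b, by omega⟩, by rw [Sym2.eq_iff]; right; constructor <;> ext <;> simp; omega⟩

lemma exists_eq_of_mem_edgeSet_multiCopy_pathGraph {k m : ℕ} {e : Sym2 (Fin k × Fin (m + 1))}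
    (he : e ∈ (multiCopy k (pathGraph (m + 1))).edgeSet) :
    ∃ i l, e = s((i, Fin.castSucc l), (i, Fin.succ l)) := by
  induction e using Sym2.ind with
  | h x y =>
    obtain ⟨i, a⟩ := x
    obtain ⟨i', b⟩ := y
    obtain ⟨hi, hadj⟩ : i = i' ∧ (pathGraph (m + 1)).Adj a b := he
    subst hi
    obtain ⟨l, hl⟩ := exists_eq_castSucc_succ_of_pathGraph_adj hadj
    exact ⟨i, l, by simpa using congrArg (Sym2.map (Prod.mk i)) hl⟩

lemma mem_edgeSet_multiCopy_pathGraph_two {k : ℕ} {e : Sym2 (Fin k × Fin 2)} :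
    e ∈ (multiCopy k (pathGraph 2)).edgeSet ↔ ∃ i, e = s((i, 0), (i, 1)) := by
  constructor
  · intro he
    obtain ⟨i, l, rfl⟩ := exists_eq_of_mem_edgeSet_multiCopy_pathGraph he
    exact ⟨i, by rw [Subsingleton.elim l 0]; rfl⟩
  · rintro ⟨i, rfl⟩
    exact ⟨rfl, by simp [pathGraph_adj]⟩

end SimpleGraph

theorem ncard_edgesInside_compl_add_ncard_edgesBetween_le {α : Type*} [Fintype α]
    (G : SimpleGraph α) [DecidableRel G.Adj] (A : Set α) {d : ℕ} (h : ∀ v ∉ A, G.degree v ≤ d) :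
    (edgesInside G Aᶜ).ncard + (edgesBetween G A Aᶜ).ncard ≤ d * Aᶜ.ncard := by
  classical
  have hdisj : Disjoint (edgesInside G Aᶜ) (edgesBetween G A Aᶜ) := by
    rw [Set.disjoint_left]
    rintro _ ⟨-, hin⟩ ⟨-, u, w, rfl, hu, -⟩
    exact hin u (Sym2.mem_mk_left u w) hu
  have hsub : edgesInside G Aᶜ ∪ edgesBetween G A Aᶜ ⊆
      ↑(Aᶜ.toFinset.biUnion fun v => G.incidenceFinset v) := by
    rintro e (⟨he, hin⟩ | ⟨he, u, w, rfl, -, hw⟩)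
    · induction e using Sym2.ind with
      | h u w =>
        simpa [mem_incidenceFinset] using
          ⟨u, hin u (Sym2.mem_mk_left u w), he, Sym2.mem_mk_left u w⟩
    · simpa [mem_incidenceFinset] using ⟨w, hw, he, Sym2.mem_mk_right u w⟩
  calc (edgesInside G Aᶜ).ncard + (edgesBetween G A Aᶜ).ncard
      = (edgesInside G Aᶜ ∪ edgesBetween G A Aᶜ).ncard := (Set.ncard_union_eq hdisj).symm
    _ ≤ (Aᶜ.toFinset.biUnion fun v => G.incidenceFinset v).card :=
      (Set.ncard_le_ncard hsub).trans (Set.ncard_coe_finset _).le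
    _ ≤ ∑ v ∈ Aᶜ.toFinset, (G.incidenceFinset v).card := Finset.card_biUnion_le
    _ ≤ ∑ _v ∈ Aᶜ.toFinset, d :=
      Finset.sum_le_sum fun v hv => by simpa using h v (by simpa using hv)
    _ = d * Aᶜ.ncard := by simp [Set.ncard_eq_toFinset_card', mul_comm]

lemma Function.Injective.apply_ne_of_ne_invFun {α β : Type*} [Nonempty α] {φ : α → β}
    (hφ : Injective φ) {a : α} {b : β} (h : a ≠ invFun φ b) : φ a ≠ b := by
  rintro rfl
  exact h (leftInverse_invFun hφ a).symm

def kP4tP2OneEdge (t : ℕ) : Fin 3 ⊕ Fin t → Sym2 ((Fin 1 × Fin 4) ⊕ (Fin t × Fin 2)) :=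
  Sum.elim (fun l => s(.inl (0, l.castSucc), .inl (0, l.succ)))
    (fun i => s(.inr (i, 0), .inr (i, 1)))

lemma edgeSet_kP4tP2_one_subset (t : ℕ) : (kP4tP2 1 t).edgeSet ⊆ Set.range (kP4tP2OneEdge t) := by
  intro e he
  induction e using Sym2.ind with
  | h x y =>
    rcases x with x | x <;> rcases y with y | y
    · obtain ⟨i, l, hl⟩ := exists_eq_of_mem_edgeSet_multiCopy_pathGraph (e := s(x, y)) he
      rw [Subsingleton.elim i 0] at hl
      exact ⟨.inl l, by simpa [kP4tP2OneEdge] using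
        (congrArg (Sym2.map (Sum.inl (β := Fin t × Fin 2))) hl).symm⟩
    · exact he.elim
    · exact he.elim
    · obtain ⟨i, hi⟩ := mem_edgeSet_multiCopy_pathGraph_two.1 (show s(x, y) ∈ _ from he)
      exact ⟨.inr i, by simpa [kP4tP2OneEdge] using
        (congrArg (Sym2.map (Sum.inr (α := Fin 1 × Fin 4))) hi).symm⟩

lemma hasRainbowCopy_kP4tP2_one_s13 {t n : ℕ} {c : Sym2 (Fin n) → ℕ}
    (F : (Fin 1 × Fin 4) ⊕ (Fin t × Fin 2) ↪ Fin n)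
    (hF : Injective fun a => c (Sym2.map F (kP4tP2OneEdge t a))) :
    HasRainbowCopy n c (kP4tP2 1 t) := by
  refine ⟨F, ?_⟩
  rintro _ he₁ _ he₂ h
  obtain ⟨a₁, rfl⟩ := edgeSet_kP4tP2_one_subset t he₁
  obtain ⟨a₂, rfl⟩ := edgeSet_kP4tP2_one_subset t he₂
  rw [hF h]

def matchingEdge {m n : ℕ} (f : Fin m × Fin 2 ↪ Fin n) (i : Fin m) : Sym2 (Fin n) :=
  s(f (i, 0), f (i, 1))

lemma matchingEdge_injective {m n : ℕ} (f : Fin m × Fin 2 ↪ Fin n) :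
    Injective (matchingEdge f) := by
  intro i i' h
  rcases Sym2.eq_iff.1 h with ⟨h₀, -⟩ | ⟨h₀, -⟩
  · exact congrArg Prod.fst (f.injective h₀)
  · exact absurd (congrArg Prod.snd (f.injective h₀)) Fin.zero_ne_one

lemma mem_range_of_mem_matchingEdge {m n : ℕ} {f : Fin m × Fin 2 ↪ Fin n} {i : Fin m} {u : Fin n}
    (hu : u ∈ matchingEdge f i) : u ∈ Set.range f := by
  rcases Sym2.mem_iff.1 hu with rfl | rfl <;> exact ⟨_, rfl⟩

lemma mk_add_one_eq_matchingEdge {m n : ℕ} (f : Fin m × Fin 2 ↪ Fin n) (i : Fin m) (j : Fin 2) :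
    s(f (i, j + 1), f (i, j)) = matchingEdge f i := by
  fin_cases j
  · exact Sym2.eq_swap
  · rfl

theorem hasRainbowCopy_of_rainbowPath {t n : ℕ} {c : Sym2 (Fin n) → ℕ}
    {f : Fin (t + 2) × Fin 2 ↪ Fin n} (hf : Injective (c ∘ matchingEdge f)) {a b d e : Fin n}
    (hab : a ≠ b) (had : a ≠ d) (hae : a ≠ e) (hbd : b ≠ d) (hbe : b ≠ e) (hde : d ≠ e)
    (hc₁ : c s(a, b) ≠ c s(b, d)) (hc₂ : c s(a, b) ≠ c s(d, e)) (hc₃ : c s(b, d) ≠ c s(d, e))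
    (i₁ i₂ : Fin (t + 2))
    (hvert : ∀ i, i ≠ i₁ → i ≠ i₂ → ∀ j, f (i, j) ≠ a ∧ f (i, j) ≠ b ∧ f (i, j) ≠ d ∧ f (i, j) ≠ e)
    (hcolor : ∀ i, i ≠ i₁ → i ≠ i₂ → c (matchingEdge f i) ≠ c s(a, b) ∧
      c (matchingEdge f i) ≠ c s(b, d) ∧ c (matchingEdge f i) ≠ c s(d, e)) :
    HasRainbowCopy n c (kP4tP2 1 t) := by
  classical
  obtain ⟨g⟩ : Nonempty (Fin t ↪ ({i₁, i₂}ᶜ : Finset (Fin (t + 2)))) := by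
    refine Function.Embedding.nonempty_of_card_le ?_
    simp only [Fintype.card_fin, Fintype.card_coe, Finset.card_compl]
    have := Finset.card_le_two (a := i₁) (b := i₂)
    omega
  have hg : ∀ x, (g x : Fin (t + 2)) ≠ i₁ ∧ (g x : Fin (t + 2)) ≠ i₂ := by
    intro x
    simpa using (g x).2
  let p : Fin 4 → Fin n := ![a, b, d, e]
  let F : (Fin 1 × Fin 4) ⊕ (Fin t × Fin 2) ↪ Fin n :=
    ⟨Sum.elim (fun x => p x.2) (fun x => f (g x.1, x.2)), by
      refine Injective.sumElim ?_ ?_ ?_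
      · rintro ⟨u, k⟩ ⟨u', k'⟩ h
        obtain rfl : k = k' := List.nodup_ofFn.1 (by simp [p, *]) h
        rw [Subsingleton.elim u u']
      · rintro ⟨x, j⟩ ⟨x', j'⟩ h
        obtain ⟨hx, rfl⟩ : (g x : Fin (t + 2)) = g x' ∧ j = j' := Prod.ext_iff.1 (f.injective h)
        rw [g.injective (Subtype.ext hx)]
      · rintro ⟨u, k⟩ ⟨x, j⟩ h
        have := hvert _ (hg x).1 (hg x).2 j
        fin_cases k <;> simp_all [p]⟩
  refine hasRainbowCopy_kP4tP2_one_s13 F ?_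
  rw [← Sum.elim_comp_inl_inr (fun a => c (Sym2.map F (kP4tP2OneEdge t a)))]
  refine Injective.sumElim ?_ ?_ ?_
  · exact List.nodup_ofFn.1 (by simp [F, p, kP4tP2OneEdge, *])
  · intro x x' h
    exact g.injective (Subtype.ext (hf h))
  · intro l x h
    obtain ⟨h₁, h₂, h₃⟩ := hcolor _ (hg x).1 (hg x).2
    fin_cases l
    · exact h₁ h.symm
    · exact h₂ h.symm
    · exact h₃ h.symm

section RainbowSubgraph

variable {m n : ℕ} {c : Sym2 (Fin n) → ℕ} {G : SimpleGraph (Fin n)}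

lemma color_ne_of_adj_of_adj (hG : Set.InjOn c G.edgeSet) {v x y : Fin n} (hx : G.Adj v x)
    (hy : G.Adj v y) (hxy : x ≠ y) : c s(v, x) ≠ c s(v, y) :=
  hG.ne hx hy (mt Sym2.congr_right.1 hxy)

variable {f : Fin m × Fin 2 ↪ Fin n}

lemma color_matchingEdge_injective (hG : Set.InjOn c G.edgeSet)
    (hM : ∀ i, matchingEdge f i ∈ G.edgeSet) : Injective (c ∘ matchingEdge f) :=
  fun _ _ h => matchingEdge_injective f (hG (hM _) (hM _) h)

lemma color_matchingEdge_ne (hG : Set.InjOn c G.edgeSet) (hM : ∀ i, matchingEdge f i ∈ G.edgeSet)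
    {e : Sym2 (Fin n)} (he : e ∈ G.edgeSet) {u : Fin n} (hue : u ∈ e) (hu : u ∉ Set.range f)
    (i : Fin m) : c (matchingEdge f i) ≠ c e :=
  hG.ne (hM i) he fun h => hu (mem_range_of_mem_matchingEdge (h ▸ hue))

end RainbowSubgraph

section NoRainbowCopy

variable {t n : ℕ} {c : Sym2 (Fin n) → ℕ} {G : SimpleGraph (Fin n)}
  {f : Fin (t + 2) × Fin 2 ↪ Fin n}

theorem hasRainbowCopy_of_adj_matching_vertex (hG : Set.InjOn c G.edgeSet)
    (hM : ∀ i, matchingEdge f i ∈ G.edgeSet) {v y : Fin n} {i : Fin (t + 2)} {j : Fin 2}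
    (hv : v ∉ Set.range f) (hx : G.Adj v (f (i, j))) (hy : G.Adj v y)
    (hyx : y ≠ f (i, j)) (hyw : y ≠ f (i, j + 1)) : HasRainbowCopy n c (kP4tP2 1 t) := by
  have hwx : f (i, j + 1) ≠ f (i, j) :=
    f.injective.ne (ne_of_apply_ne Prod.snd (show j + 1 ≠ j by fin_cases j <;> decide))
  have hxv : c (matchingEdge f i) ≠ c s(f (i, j), v) :=
    color_matchingEdge_ne hG hM hx.symm (Sym2.mem_mk_right _ _) hv i
  have hvy : c (matchingEdge f i) ≠ c s(v, y) :=
    color_matchingEdge_ne hG hM hy (Sym2.mem_mk_left _ _) hv i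
  refine hasRainbowCopy_of_rainbowPath (color_matchingEdge_injective hG hM) hwx
    (fun h => hv ⟨_, h⟩) hyw.symm hx.ne' hyx.symm hy.ne
    (by rwa [mk_add_one_eq_matchingEdge]) (by rwa [mk_add_one_eq_matchingEdge])
    (by rw [Sym2.eq_swap]; exact color_ne_of_adj_of_adj hG hx hy hyx.symm)
    -- the second spoiled edge of `H` is the one through `y`, if there is one
    i (invFun f y).1 ?_ ?_
  · intro i' hi hiy j'
    exact ⟨f.injective.ne (ne_of_apply_ne Prod.fst hi), f.injective.ne (ne_of_apply_ne Prod.fst hi),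
      fun h => hv ⟨_, h⟩, f.injective.apply_ne_of_ne_invFun (ne_of_apply_ne Prod.fst hiy)⟩
  · intro i' hi _
    rw [mk_add_one_eq_matchingEdge]
    exact ⟨(color_matchingEdge_injective hG hM).ne hi,
      color_matchingEdge_ne hG hM hx.symm (Sym2.mem_mk_right _ _) hv i',
      color_matchingEdge_ne hG hM hy (Sym2.mem_mk_left _ _) hv i'⟩

theorem color_eq_or_eq_of_fan (hno : ¬ HasRainbowCopy n c (kP4tP2 1 t))
    (hG : Set.InjOn c G.edgeSet) (hM : ∀ i, matchingEdge f i ∈ G.edgeSet) {v p q r : Fin n}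
    (hv : v ∉ Set.range f) (hp : p ∉ Set.range f) (hq : q ∉ Set.range f) (hr : r ∉ Set.range f)
    (hvp : G.Adj v p) (hvq : G.Adj v q) (hvr : G.Adj v r) (hpq : p ≠ q) (hpr : p ≠ r)
    (hqr : q ≠ r) : c s(p, q) = c s(r, v) ∨ c s(p, q) = c s(v, p) := by
  by_contra! h
  refine hno (hasRainbowCopy_of_rainbowPath (color_matchingEdge_injective hG hM) hvr.ne'
    hpr.symm hqr.symm hvp.ne hvq.ne hpq
    (by rw [Sym2.eq_swap]; exact color_ne_of_adj_of_adj hG hvr hvp hpr.symm)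
    (Ne.symm h.1) (Ne.symm h.2)
    (invFun (c ∘ matchingEdge f) (c s(p, q))) (invFun (c ∘ matchingEdge f) (c s(p, q)))
    (fun i _ _ j => ⟨fun h => hr ⟨_, h⟩, fun h => hv ⟨_, h⟩, fun h => hp ⟨_, h⟩,
      fun h => hq ⟨_, h⟩⟩) fun i hi _ => ⟨?_, ?_, ?_⟩)
  · exact color_matchingEdge_ne hG hM hvr.symm (Sym2.mem_mk_right _ _) hv i
  · exact color_matchingEdge_ne hG hM hvp (Sym2.mem_mk_left _ _) hv i
  · exact (color_matchingEdge_injective hG hM).apply_ne_of_ne_invFun hi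

theorem color_eq_of_fan (hno : ¬ HasRainbowCopy n c (kP4tP2 1 t))
    (hG : Set.InjOn c G.edgeSet) (hM : ∀ i, matchingEdge f i ∈ G.edgeSet) {v p q r : Fin n}
    (hv : v ∉ Set.range f) (hp : p ∉ Set.range f) (hq : q ∉ Set.range f) (hr : r ∉ Set.range f)
    (hvp : G.Adj v p) (hvq : G.Adj v q) (hvr : G.Adj v r) (hpq : p ≠ q) (hpr : p ≠ r)
    (hqr : q ≠ r) : c s(p, q) = c s(r, v) := by
  obtain h | hpv := color_eq_or_eq_of_fan hno hG hM hv hp hq hr hvp hvq hvr hpq hpr hqr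
  · exact h
  obtain h | hqv := color_eq_or_eq_of_fan hno hG hM hv hq hp hr hvq hvp hvr hpq.symm hqr hpr
  · rwa [Sym2.eq_swap]
  rw [Sym2.eq_swap] at hqv
  exact absurd (hpv.symm.trans hqv) (color_ne_of_adj_of_adj hG hvp hvq hpq)

theorem color_eq_or_eq_of_matching_path (hno : ¬ HasRainbowCopy n c (kP4tP2 1 t))
    (hG : Set.InjOn c G.edgeSet) (hM : ∀ i, matchingEdge f i ∈ G.edgeSet) (i : Fin (t + 2))
    {x u : Fin n} (hx : x ∉ Set.range f) (hu : u ∉ Set.range f) (hxu : x ≠ u)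
    (hxuc : ∀ i', c (matchingEdge f i') ≠ c s(x, u)) :
    c s(f (i, 0), x) = c (matchingEdge f i) ∨ c s(f (i, 0), x) = c s(x, u) := by
  by_contra! h
  have hw : s(f (i, 1), f (i, 0)) = matchingEdge f i := mk_add_one_eq_matchingEdge f i 0
  refine hno (hasRainbowCopy_of_rainbowPath (color_matchingEdge_injective hG hM)
    (f.injective.ne (by simp)) (fun h => hx ⟨_, h⟩) (fun h => hu ⟨_, h⟩)
    (fun h => hx ⟨_, h⟩) (fun h => hu ⟨_, h⟩) hxu (hw ▸ Ne.symm h.1) (hw ▸ hxuc i) h.2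
    i (invFun (c ∘ matchingEdge f) (c s(f (i, 0), x))) ?_ ?_)
  · intro i' hi _ j
    exact ⟨f.injective.ne (ne_of_apply_ne Prod.fst hi), f.injective.ne (ne_of_apply_ne Prod.fst hi),
      fun h => hx ⟨_, h⟩, fun h => hu ⟨_, h⟩⟩
  · intro i' hi hic
    exact ⟨hw ▸ (color_matchingEdge_injective hG hM).ne hi,
      (color_matchingEdge_injective hG hM).apply_ne_of_ne_invFun hic, hxuc i'⟩

theorem hasRainbowCopy_of_adj_of_notMem_range (hG : Set.InjOn c G.edgeSet)
    (hM : ∀ i, matchingEdge f i ∈ G.edgeSet) {v x y z : Fin n} (hv : v ∉ Set.range f)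
    (hx : x ∉ Set.range f) (hy : y ∉ Set.range f) (hz : z ∉ Set.range f)
    (hvx : G.Adj v x) (hvy : G.Adj v y) (hvz : G.Adj v z) (hxy : x ≠ y) (hxz : x ≠ z)
    (hyz : y ≠ z) : HasRainbowCopy n c (kP4tP2 1 t) := by
  by_contra hno
  have hcv : ∀ {w} (_ : G.Adj v w) i, c (matchingEdge f i) ≠ c s(w, v) := fun hw =>
    color_matchingEdge_ne hG hM hw.symm (Sym2.mem_mk_right _ _) hv
  have hxy_zv : c s(x, y) = c s(z, v) :=
    color_eq_of_fan hno hG hM hv hx hy hz hvx hvy hvz hxy hxz hyz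
  have hw₀x : c s(f (0, 0), x) = c (matchingEdge f 0) := by
    obtain h | hxv := color_eq_or_eq_of_matching_path hno hG hM 0 hx hv hvx.ne' (hcv hvx)
    · exact h
    obtain h | hxy' := color_eq_or_eq_of_matching_path hno hG hM 0 hx hy hxy
      (hxy_zv ▸ hcv hvz)
    · exact h
    refine absurd ?_ (color_ne_of_adj_of_adj hG hvx hvz hxz)
    rw [Sym2.eq_swap, ← hxv, hxy', hxy_zv, Sym2.eq_swap]
  rw [Sym2.eq_swap] at hw₀x
  refine hno (hasRainbowCopy_of_rainbowPath (color_matchingEdge_injective hG hM) hvy.ne' hxy.symm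
    (fun h => hy ⟨_, h.symm⟩) hvx.ne (fun h => hv ⟨_, h.symm⟩) (fun h => hx ⟨_, h.symm⟩)
    (by rw [Sym2.eq_swap]; exact color_ne_of_adj_of_adj hG hvy hvx hxy.symm)
    (hw₀x ▸ Ne.symm (hcv hvy 0)) (hw₀x ▸ by rw [Sym2.eq_swap]; exact Ne.symm (hcv hvx 0))
    0 0 ?_ ?_)
  · intro i hi _ j
    exact ⟨fun h => hy ⟨_, h⟩, fun h => hv ⟨_, h⟩, fun h => hx ⟨_, h⟩,
      f.injective.ne (ne_of_apply_ne Prod.fst hi)⟩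
  · intro i hi _
    refine ⟨hcv hvy i, ?_, hw₀x ▸ (color_matchingEdge_injective hG hM).ne hi⟩
    rw [Sym2.eq_swap]
    exact hcv hvx i

theorem degree_le_two_of_notMem_range [DecidableRel G.Adj]
    (hno : ¬ HasRainbowCopy n c (kP4tP2 1 t)) (hG : Set.InjOn c G.edgeSet)
    (hM : ∀ i, matchingEdge f i ∈ G.edgeSet) {v : Fin n} (hv : v ∉ Set.range f) :
    G.degree v ≤ 2 := by
  by_contra! h
  obtain ⟨x, hx, y, hy, z, hz, hxy, hxz, hyz⟩ := Finset.two_lt_card.1 h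
  rw [mem_neighborFinset] at hx hy hz
  have houtside : ∀ {x y z}, G.Adj v x → G.Adj v y → G.Adj v z → x ≠ y → x ≠ z → y ≠ z →
      x ∉ Set.range f := by
    rintro x y z hx hy hz hxy hxz hyz ⟨⟨i, j⟩, rfl⟩
    by_cases hyw : y = f (i, j + 1)
    · exact hno (hasRainbowCopy_of_adj_matching_vertex hG hM hv hx hz hxz.symm (hyw ▸ hyz.symm))
    · exact hno (hasRainbowCopy_of_adj_matching_vertex hG hM hv hx hy hxy.symm hyw)
  exact hno (hasRainbowCopy_of_adj_of_notMem_range hG hM hv (houtside hx hy hz hxy hxz hyz)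
    (houtside hy hx hz hxy.symm hyz hxz) (houtside hz hx hy hxz.symm hyz.symm hxy)
    hx hy hz hxy hxz hyz)

end NoRainbowCopy

theorem stmt_13_general (t n : ℕ)
    (c : Sym2 (Fin n) → ℕ)
    (hno : ¬ HasRainbowCopy n c (kP4tP2 1 t))
    (f : (Fin (t + 2) × Fin 2) ↪ Fin n)
    (G : SimpleGraph (Fin n))
    (hG : Set.InjOn c G.edgeSet)
    (hHG : ∀ e ∈ (SimpleGraph.multiCopy (t + 2) (SimpleGraph.pathGraph 2)).edgeSet,
      Sym2.map (⇑f) e ∈ G.edgeSet) :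
    (edgesInside G (Set.range ⇑f)ᶜ).ncard +
      (edgesBetween G (Set.range ⇑f) (Set.range ⇑f)ᶜ).ncard ≤ 2 * n - 4 * t - 8 := by
  classical
  have hM : ∀ i, matchingEdge f i ∈ G.edgeSet := fun i =>
    hHG _ (mem_edgeSet_multiCopy_pathGraph_two.2 ⟨i, rfl⟩)
  have hcompl : (Set.range f).ncard + (Set.range f)ᶜ.ncard = n := by
    rw [Set.ncard_add_ncard_compl, Nat.card_eq_fintype_card, Fintype.card_fin]
  have hrange : (Set.range f).ncard = (t + 2) * 2 := by
    rw [Set.ncard_range_of_injective f.injective, Nat.card_eq_fintype_card, Fintype.card_prod,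
      Fintype.card_fin, Fintype.card_fin]
  calc _ ≤ 2 * (Set.range f)ᶜ.ncard := ncard_edgesInside_compl_add_ncard_edgesBetween_le G _
        fun v hv => degree_le_two_of_notMem_range hno hG hM hv
    _ = 2 * n - 4 * t - 8 := by omega

/-- Let `t ≥ 2`, `n ≥ 2t + 4`, let `c` be an edge-coloring of `K_n` with
no rainbow copy of `P₄ ∪ tP₂`, let `f` be a rainbow copy of `(t + 2)P₂` in `K_n`, let
`G` be a rainbow spanning subgraph of `K_n` containing the edges of that copy, and let
`V'` be the complement of the vertex set of the copy. Then
`|E(G[V'])| + |[V(H), V']_G| ≤ 2n - 4t - 8`. -/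
theorem stmt_13 (t n : ℕ) (ht : 2 ≤ t) (hn : 2 * t + 4 ≤ n)
    (c : Sym2 (Fin n) → ℕ)
    (hno : ¬ HasRainbowCopy n c (kP4tP2 1 t))
    (f : (Fin (t + 2) × Fin 2) ↪ Fin n)
    (hH : Set.InjOn (fun e => c (Sym2.map (⇑f) e))
      (SimpleGraph.multiCopy (t + 2) (SimpleGraph.pathGraph 2)).edgeSet)
    (G : SimpleGraph (Fin n))
    (hG : Set.InjOn c G.edgeSet)
    (hHG : ∀ e ∈ (SimpleGraph.multiCopy (t + 2) (SimpleGraph.pathGraph 2)).edgeSet,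
      Sym2.map (⇑f) e ∈ G.edgeSet) :
    (edgesInside G (Set.range ⇑f)ᶜ).ncard +
      (edgesBetween G (Set.range ⇑f) (Set.range ⇑f)ᶜ).ncard ≤ 2 * n - 4 * t - 8 :=
  stmt_13_general t n c hno f G hG hHG
end

section
/- Let t ≥ 2 and n ≥ 2t + 4 be integers. If an edge-coloring c of K_n contains a rainbow copy of (t + 2)P₂ but contains no rainbow copy of P₄ ∪ tP₂, then the total number of colors used satisfies |c(K_n)| ≤ 2n − 3t − 6. -/
/-!
Keep one edge of each colour, among them the edges of the rainbow matching `M = (t + 2)P₂`: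
the resulting graph `G` is rainbow, has `|c(K_n)|` edges, and hence contains no `P₄ ∪ tP₂`.
A `P₄` of `G` meeting at most two edges of `M` would, together with `t` further edges of `M`,
be such a copy. So the only edges of `G` inside `V(M)` are those of `M`; a vertex outside `V(M)`
that sees `M` sees a single edge of it and nothing outside `V(M)`; and outside `V(M)` every walk
`w x y z` with `w ≠ y`, `x ≠ z` closes into a triangle. Now discharge every edge onto its ends:
half to each end inside `V(M)`, everything to the outer end of an edge leaving `V(M)`, and
`1 / deg` to each end outside `V(M)` (enough, by the triangle property). Each vertex of `V(M)`
receives at most `1/2` and every other vertex at most `2`, so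
`|E(G)| ≤ (t + 2) + 2 (n - 2t - 4) = 2n - 3t - 6`.
-/

open Finset SimpleGraph

namespace SimpleGraph

variable {V α β : Type*} {G : SimpleGraph V}

@[simp]
theorem Copy.apply_inj {A : SimpleGraph α} {B : SimpleGraph β} (f : A.Copy B) {a b : α} :
    f a = f b ↔ a = b :=
  f.injective.eq_iff

theorem disjUnion_isContained {A : SimpleGraph α} {B : SimpleGraph β} (f : A.Copy G)
    (g : B.Copy G) (hfg : ∀ a b, f a ≠ g b) : A.disjUnion B ⊑ G :=
  ⟨⟨⟨Sum.elim f g, fun {x y} h => by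
      rcases x with a | a <;> rcases y with b | b
      · exact f.toHom.map_adj h
      · exact h.elim
      · exact h.elim
      · exact g.toHom.map_adj h⟩,
    f.injective.sumElim g.injective hfg⟩⟩

def multiCopyOneIso (H : SimpleGraph α) : multiCopy 1 H ≃g H where
  toEquiv := Equiv.uniqueProd α (Fin 1)
  map_rel_iff' := by simp [multiCopy]

def Copy.multiCopyMap {t m : ℕ} (j : Fin t ↪ Fin m) (H : SimpleGraph α) :
    (multiCopy t H).Copy (multiCopy m H) :=
  ⟨⟨fun x => (j x.1, x.2), fun h => ⟨congrArg j h.1, h.2⟩⟩,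
    fun _ _ h => Prod.ext (j.injective (Prod.ext_iff.1 h).1) (Prod.ext_iff.1 h).2⟩

theorem kP4tP2_one_isContained {t m : ℕ} (p : (pathGraph 4).Copy G)
    (M : (multiCopy m (pathGraph 2)).Copy G) (j : Fin t ↪ Fin m)
    (hpM : ∀ k l a, p k ≠ M (j l, a)) : kP4tP2 1 t ⊑ G :=
  disjUnion_isContained (p.comp (multiCopyOneIso _).toCopy) (M.comp (Copy.multiCopyMap j _))
    fun a b => hpM a.2 b.1 b.2

def pathGraphFourCopy {a b c d : V} (hab : G.Adj a b) (hbc : G.Adj b c) (hcd : G.Adj c d)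
    (hac : a ≠ c) (had : a ≠ d) (hbd : b ≠ d) : (pathGraph 4).Copy G :=
  ⟨⟨![a, b, c, d], fun {x y} h => by
      rw [pathGraph_adj] at h
      fin_cases x <;> fin_cases y <;> simp at h ⊢ <;>
        first | assumption | exact G.adj_symm (by assumption)⟩,
    fun x y h => by
      have := G.ne_of_adj hab
      have := G.ne_of_adj hbc
      have := G.ne_of_adj hcd
      fin_cases x <;> fin_cases y <;> simp at h ⊢ <;> simp_all [eq_comm]⟩

section Degree

variable [Fintype V] [DecidableRel G.Adj] {K : Type*} [Field K] [LinearOrder K]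
  [IsStrictOrderedRing K]

theorem card_edgeFinset_le_sum_of_one_le_add (φ : V → V → K)
    (hφ : ∀ u v, G.Adj u v → 1 ≤ φ u v + φ v u) :
    (#G.edgeFinset : K) ≤ ∑ v, ∑ w ∈ G.neighborFinset v, φ v w := by
  have hswap : ∑ v, ∑ w ∈ G.neighborFinset v, φ w v = ∑ v, ∑ w ∈ G.neighborFinset v, φ v w := by
    simp only [neighborFinset_eq_filter, sum_filter]
    rw [sum_comm]
    simp only [G.adj_comm]
  have hdeg : (2 * #G.edgeFinset : K) = ∑ v, ∑ _w ∈ G.neighborFinset v, 1 := by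
    simp only [sum_const, card_neighborFinset_eq_degree, nsmul_eq_mul, mul_one]
    exact_mod_cast G.sum_degrees_eq_twice_card_edges.symm
  have : (2 * #G.edgeFinset : K) ≤ 2 * ∑ v, ∑ w ∈ G.neighborFinset v, φ v w :=
    calc (2 * #G.edgeFinset : K)
        ≤ ∑ v, ∑ w ∈ G.neighborFinset v, (φ v w + φ w v) := by
          rw [hdeg]
          exact sum_le_sum fun v _ => sum_le_sum fun w hw =>
            hφ v w ((mem_neighborFinset ..).1 hw)
      _ = 2 * ∑ v, ∑ w ∈ G.neighborFinset v, φ v w := by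
          simp only [sum_add_distrib, hswap, two_mul]
  linarith

theorem degree_le_two_of_forall_eq {u v : V}
    (h : ∀ w z, G.Adj w u → G.Adj v z → w ≠ v → z ≠ u → w = z) (hv : 2 ≤ G.degree v) :
    G.degree u ≤ 2 := by
  classical
  obtain ⟨z, hz, hzu⟩ := exists_mem_ne (s := G.neighborFinset v) (by simp; omega) u
  have hsub : G.neighborFinset u ⊆ {v, z} := fun w hw => by
    rw [mem_neighborFinset] at hw hz
    by_cases hwv : w = v
    · simp [hwv]
    · simp [h w z hw.symm hz hwv hzu]
  rw [← card_neighborFinset_eq_degree]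
  exact (card_le_card hsub).trans card_le_two

theorem one_le_inv_degree_add_inv_degree {u v : V} (huv : G.Adj u v)
    (h : ∀ w z, G.Adj w u → G.Adj v z → w ≠ v → z ≠ u → w = z) :
    1 ≤ (G.degree u : K)⁻¹ + (G.degree v : K)⁻¹ := by
  have hu : 0 < G.degree u := G.degree_pos_iff_exists_adj u |>.2 ⟨v, huv⟩
  have hv : 0 < G.degree v := G.degree_pos_iff_exists_adj v |>.2 ⟨u, huv.symm⟩
  by_cases hu1 : G.degree u = 1
  · simp [hu1]
  by_cases hv1 : G.degree v = 1
  · simp [hv1]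
  have hu2 : G.degree u = 2 := le_antisymm (degree_le_two_of_forall_eq h (by omega)) (by omega)
  have hv2 : G.degree v = 2 := le_antisymm (degree_le_two_of_forall_eq
    (fun w z hwv huz hwu hzv => (h z w huz.symm hwv.symm hzv hwu).symm) (by omega)) (by omega)
  rw [hu2, hv2]
  norm_num

end Degree

section Matching

variable {t : ℕ} (M : (multiCopy (t + 2) (pathGraph 2)).Copy G)

theorem adj_matching (i : Fin (t + 2)) {a b : Fin 2} (hab : a ≠ b) :
    G.Adj (M (i, a)) (M (i, b)) :=
  M.toHom.map_adj ⟨rfl, by simpa [pathGraph_two_eq_top] using hab⟩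

variable (hG : (kP4tP2 1 t).Free G)
include hG

theorem eq_of_walk_meeting_two_matching_edges {w x y z : V} (hwx : G.Adj w x)
    (hxy : G.Adj x y) (hyz : G.Adj y z) (hwy : w ≠ y) (hxz : x ≠ z) (I : Finset (Fin (t + 2)))
    (hI : #I ≤ 2) (hM : ∀ i a, M (i, a) ∈ ({w, x, y, z} : Set V) → i ∈ I) : w = z := by
  by_contra hwz
  obtain ⟨J, hJI, hJ⟩ := exists_subset_card_eq (s := Iᶜ) (n := t) (by simp [card_compl]; omega)
  refine hG (kP4tP2_one_isContained (pathGraphFourCopy hwx hxy hyz hwy hwz hxz) M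
    (J.orderEmbOfFin hJ).toEmbedding fun k l a hk => ?_)
  refine mem_compl.1 (hJI (J.orderEmbOfFin_mem hJ l)) (hM _ a ?_)
  rw [← RelEmbedding.coe_toEmbedding, ← hk]
  change ![w, x, y, z] k ∈ _
  fin_cases k <;> simp

theorem eq_of_adj_matching {i j : Fin (t + 2)} {a b : Fin 2}
    (h : G.Adj (M (i, a)) (M (j, b))) : i = j := by
  by_contra hij
  obtain ⟨a', ha'⟩ := exists_ne a
  obtain ⟨b', hb'⟩ := exists_ne b
  have := eq_of_walk_meeting_two_matching_edges M hG (adj_matching M i ha') h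
    (adj_matching M j hb'.symm) (by simp [hij]) (by simp [hij]) {i, j} card_le_two
    fun k c => by simp; tauto
  simp_all

theorem eq_of_adj_matching_of_notMem_range {v : V} (hv : v ∉ Set.range M) {i j : Fin (t + 2)}
    {a b : Fin 2} (hi : G.Adj v (M (i, a))) (hj : G.Adj v (M (j, b))) : i = j := by
  by_contra hij
  obtain ⟨b', hb'⟩ := exists_ne b
  simp only [Set.mem_range, not_exists] at hv
  have := eq_of_walk_meeting_two_matching_edges M hG hi.symm hj (adj_matching M j hb'.symm)
    (by simp [hij]) (Ne.symm (hv _)) {i, j} card_le_two fun k c => by simp [hv]; tauto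
  simp_all

theorem not_adj_matching_of_adj {u v : V} (hu : u ∉ Set.range M) (hv : v ∉ Set.range M)
    (huv : G.Adj u v) (i : Fin (t + 2)) (a : Fin 2) : ¬ G.Adj v (M (i, a)) := by
  intro hva
  obtain ⟨a', ha'⟩ := exists_ne a
  simp only [Set.mem_range, not_exists] at hu hv
  exact hu _ (eq_of_walk_meeting_two_matching_edges M hG huv hva (adj_matching M i ha'.symm)
    (Ne.symm (hu _)) (Ne.symm (hv _)) {i} (by simp) fun k c => by simp [hu, hv]; tauto).symm

variable [Fintype V] [DecidableRel G.Adj]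

theorem degree_le_two_of_adj_matching {v : V} (hv : v ∉ Set.range M) {i : Fin (t + 2)}
    {a : Fin 2} (hva : G.Adj v (M (i, a))) : G.degree v ≤ 2 := by
  classical
  have hsub : G.neighborFinset v ⊆ univ.image fun b => M (i, b) := fun w hw => by
    rw [mem_neighborFinset] at hw
    by_cases hw' : w ∈ Set.range M
    · obtain ⟨⟨j, b⟩, rfl⟩ := hw'
      obtain rfl := eq_of_adj_matching_of_notMem_range M hG hv hva hw
      simp
    · exact (not_adj_matching_of_adj M hG hw' hv hw.symm i a hva).elim
  rw [← card_neighborFinset_eq_degree]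
  exact (card_le_card hsub).trans (card_image_le.trans (by simp))

omit hG in
open Classical in
noncomputable def matchingWeight (v w : V) : ℚ :=
  if v ∈ Set.range M then if w ∈ Set.range M then 2⁻¹ else 0
  else if w ∈ Set.range M then 1 else (G.degree v : ℚ)⁻¹

theorem one_le_matchingWeight_add {u v : V} (huv : G.Adj u v) :
    1 ≤ matchingWeight M u v + matchingWeight M v u := by
  by_cases hu : u ∈ Set.range M <;> by_cases hv : v ∈ Set.range M <;>
    simp only [matchingWeight, hu, hv, if_true, if_false]
  · norm_num
  · norm_num
  · norm_num
  refine one_le_inv_degree_add_inv_degree huv fun w z hwu hvz hwv hzu => ?_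
  have hw : ∀ p, M p ≠ w := fun p h =>
    not_adj_matching_of_adj M hG hv hu huv.symm p.1 p.2 (h ▸ hwu.symm)
  have hz : ∀ p, M p ≠ z := fun p h => not_adj_matching_of_adj M hG hu hv huv p.1 p.2 (h ▸ hvz)
  simp only [Set.mem_range, not_exists] at hu hv
  exact eq_of_walk_meeting_two_matching_edges M hG hwu huv hvz hwv hzu.symm ∅ (by simp)
    fun k c => by simp [hw, hu, hv, hz]

theorem sum_matchingWeight_le_of_mem {v : V} (hv : v ∈ Set.range M) :
    ∑ w ∈ G.neighborFinset v, matchingWeight M v w ≤ 2⁻¹ := by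
  classical
  obtain ⟨⟨i, a⟩, rfl⟩ := hv
  have hle : #{w ∈ G.neighborFinset (M (i, a)) | w ∈ Set.range M} ≤ 1 := by
    refine card_le_one.2 fun w₁ h₁ w₂ h₂ => ?_
    simp only [mem_filter, mem_neighborFinset] at h₁ h₂
    obtain ⟨h₁, ⟨j₁, b₁⟩, rfl⟩ := h₁
    obtain ⟨h₂, ⟨j₂, b₂⟩, rfl⟩ := h₂
    obtain rfl := eq_of_adj_matching M hG h₁
    obtain rfl := eq_of_adj_matching M hG h₂
    have h₁ := G.ne_of_adj h₁
    have h₂ := G.ne_of_adj h₂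
    simp only [ne_eq, Copy.apply_inj, Prod.mk.injEq, true_and] at h₁ h₂ ⊢
    omega
  simp only [matchingWeight, Set.mem_range_self, if_true, ← sum_filter, sum_const, nsmul_eq_mul]
  exact mul_le_of_le_one_left (by norm_num) (by exact_mod_cast hle)

theorem sum_matchingWeight_le_of_notMem {v : V} (hv : v ∉ Set.range M) :
    ∑ w ∈ G.neighborFinset v, matchingWeight M v w ≤ 2 := by
  classical
  simp only [matchingWeight, hv, if_false]
  by_cases hR : ∃ w ∈ G.neighborFinset v, w ∈ Set.range M
  · obtain ⟨_, hva, ⟨i, a⟩, rfl⟩ := hR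
    calc ∑ w ∈ G.neighborFinset v, (if w ∈ Set.range M then 1 else (G.degree v : ℚ)⁻¹)
        ≤ ∑ w ∈ G.neighborFinset v, 1 := by
          gcongr with w
          split_ifs
          exacts [le_rfl, Nat.cast_inv_le_one _]
      _ ≤ 2 := by
          rw [sum_const, nsmul_one, card_neighborFinset_eq_degree, Nat.cast_le_ofNat]
          exact degree_le_two_of_adj_matching M hG hv ((mem_neighborFinset ..).1 hva)
  · push Not at hR
    rw [sum_congr rfl fun w hw => if_neg (hR w hw), sum_const, card_neighborFinset_eq_degree,
      nsmul_eq_mul]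
    exact mul_inv_le_one.trans one_le_two

include M in
theorem card_edgeFinset_add_le : #G.edgeFinset + 3 * t + 6 ≤ 2 * Fintype.card V := by
  classical
  have hweight := card_edgeFinset_le_sum_of_one_le_add (matchingWeight M)
    fun _ _ => one_le_matchingWeight_add M hG
  have hsum : ∑ v, ∑ w ∈ G.neighborFinset v, matchingWeight M v w ≤
      ∑ v, if v ∈ Set.range M then (2⁻¹ : ℚ) else 2 := sum_le_sum fun v _ => by
    split_ifs with hv
    exacts [sum_matchingWeight_le_of_mem M hG hv, sum_matchingWeight_le_of_notMem M hG hv]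
  rw [sum_ite, sum_const, sum_const, nsmul_eq_mul, nsmul_eq_mul] at hsum
  have hR : #{v | v ∈ Set.range M} = 2 * t + 4 := by
    rw [show ({v | v ∈ Set.range M} : Finset V) = univ.map M.toEmbedding by
      ext; simp [Copy.toEmbedding]]
    simp; ring
  have hV := card_filter_add_card_filter_not (s := univ) (· ∈ Set.range M)
  rw [hR, card_univ] at hV
  rw [hR] at hsum
  have : (#G.edgeFinset : ℚ) + 3 * t + 6 ≤ 2 * Fintype.card V := by
    rw [← hV]
    push_cast at hsum ⊢
    linarith
  exact_mod_cast this

end Matching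

end SimpleGraph

section Rainbow

variable {α : Type*} {n : ℕ} {c : Sym2 (Fin n) → ℕ} {H : SimpleGraph α}

theorem hasRainbowCopy_of_isContained {G : SimpleGraph (Fin n)} (hc : Set.InjOn c G.edgeSet)
    (hHG : H ⊑ G) : HasRainbowCopy n c H := by
  obtain ⟨f⟩ := hHG
  exact ⟨f.toEmbedding, fun e he e' he' h => Sym2.map.injective f.injective
    (hc (f.toHom.map_mem_edgeSet he) (f.toHom.map_mem_edgeSet he') h)⟩

theorem HasRainbowCopy.exists_rainbow_supergraph (h : HasRainbowCopy n c H) :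
    ∃ G : SimpleGraph (Fin n), H ⊑ G ∧ Set.InjOn c G.edgeSet ∧
      G.edgeSet.ncard = colorCount n c := by
  obtain ⟨f, hf⟩ := h
  set E₀ := Sym2.map f '' H.edgeSet
  have hE₀ : E₀ ⊆ (⊤ : SimpleGraph (Fin n)).edgeSet := by
    rintro _ ⟨e, he, rfl⟩
    simpa [Sym2.isDiag_map f.injective] using H.not_isDiag_of_mem_edgeSet he
  have hinj : Set.InjOn c E₀ := by
    rintro _ ⟨e, he, rfl⟩ _ ⟨e', he', rfl⟩ hce
    rw [hf he he' hce]
  obtain ⟨E, hE₀E, hE, hbij⟩ := hinj.bijOn_image.exists_extend_of_subset hE₀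
    (Set.image_mono hE₀) (Set.surjOn_image _ _)
  have hEdge : (fromEdgeSet E).edgeSet = E := by
    rw [edgeSet_fromEdgeSet, sdiff_eq_left, ← Set.subset_compl_iff_disjoint_right, ← edgeSet_top]
    exact hE
  refine ⟨fromEdgeSet E, ⟨⟨⟨f, fun {a b} hab => ?_⟩, f.injective⟩⟩, ?_, ?_⟩
  · rw [← mem_edgeSet, hEdge]
    exact hE₀E ⟨s(a, b), hab, Sym2.map_mk _ _ _⟩
  · rw [hEdge]
    exact hbij.injOn
  · rw [hEdge, colorCount, ← hbij.image_eq, hbij.injOn.ncard_image]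

end Rainbow

theorem stmt_16_general (t n : ℕ)
    (c : Sym2 (Fin n) → ℕ)
    (h1 : HasRainbowCopy n c
      (SimpleGraph.multiCopy (t + 2) (SimpleGraph.pathGraph 2)))
    (h2 : ¬ HasRainbowCopy n c (kP4tP2 1 t)) :
    colorCount n c ≤ 2 * n - 3 * t - 6 := by
  classical
  obtain ⟨G, ⟨M⟩, hc, hcount⟩ := h1.exists_rainbow_supergraph
  have hedges := card_edgeFinset_add_le M fun h => h2 (hasRainbowCopy_of_isContained hc h)
  rw [Fintype.card_fin] at hedges
  rw [← hcount, ← coe_edgeFinset, Set.ncard_coe_finset]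
  omega

/-- Let `t ≥ 2` and `n ≥ 2t + 4`. If an edge-coloring `c` of `K_n`
contains a rainbow copy of `(t + 2)P₂` but no rainbow copy of `P₄ ∪ tP₂`, then the
number of colors used satisfies `|c(K_n)| ≤ 2n - 3t - 6`. -/
theorem stmt_16 (t n : ℕ) (ht : 2 ≤ t) (hn : 2 * t + 4 ≤ n)
    (c : Sym2 (Fin n) → ℕ)
    (h1 : HasRainbowCopy n c
      (SimpleGraph.multiCopy (t + 2) (SimpleGraph.pathGraph 2)))
    (h2 : ¬ HasRainbowCopy n c (kP4tP2 1 t)) :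
    colorCount n c ≤ 2 * n - 3 * t - 6 :=
  stmt_16_general t n c h1 h2
end
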